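/- arXiv:2210.08534 — 3 statements merged into one kernel-verified Lean document; each statement's English description precedes it below -/
import Mathlib

section
/- Let T be a set of t ≤ n/(3k) edges of the k-th power of some Hamilton cycle on [n], inducing a subgraph with c connected components and v vertices. Then t ≤ kv − (2k−1)c. -/
attribute [local instance] Classical.propDecidable

noncomputable section

open Finset

/-- The edge set of the `k`-th power of the Hamilton cycle of `K_n` determined by the cyclic
ordering `σ(0), σ(1), …, σ(n−1)` of the vertex set `ZMod n`. -/
def hamPowerEdges (n k : ℕ) [NeZero n] (σ : Equiv.Perm (ZMod n)) : Finset (Sym2 (ZMod n)) :=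
  Finset.univ.filter fun e =>
    ∃ i : ZMod n, ∃ j : ℕ, 1 ≤ j ∧ j ≤ k ∧ e = s(σ i, σ (i + (j : ZMod n)))

/-- The set of vertices touched by a set `T` of edges. -/
def edgeSupport {V : Type*} (T : Finset (Sym2 V)) : Set V := {v | ∃ e ∈ T, v ∈ e}

/-- The number of connected components of the subgraph induced by a set `T` of edges
(on its support, so there are no isolated vertices). -/
def numComponents {V : Type*} (T : Finset (Sym2 V)) : ℕ :=
  Nat.card ((SimpleGraph.fromEdgeSet (↑T : Set (Sym2 V))).induce (edgeSupport T)).ConnectedComponent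

section aux
variable {n k : ℕ} [NeZero n] {σ : Equiv.Perm (ZMod n)} {T : Finset (Sym2 (ZMod n))}

lemma adj_step (hT : T ⊆ hamPowerEdges n k σ) {x y : ZMod n}
    (h : (SimpleGraph.fromEdgeSet (↑T : Set (Sym2 (ZMod n)))).Adj x y) :
    ∃ d : ℤ, |d| ≤ k ∧ (d : ZMod n) = σ.symm y - σ.symm x := by
  rw [SimpleGraph.fromEdgeSet_adj] at h
  obtain ⟨hmem, -⟩ := h
  have h2 := hT hmem
  simp only [hamPowerEdges, Finset.mem_filter] at h2
  obtain ⟨-, i, j, hj1, hjk, he⟩ := h2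
  rw [Sym2.eq_iff] at he
  rcases he with ⟨hx, hy⟩ | ⟨hy, hx⟩
  · refine ⟨(j : ℤ), by simpa using (by exact_mod_cast hjk : (j:ℤ) ≤ k), ?_⟩
    subst hx hy; push_cast; simp
  · refine ⟨-(j : ℤ), by rw [abs_neg]; simpa using (by exact_mod_cast hjk : (j:ℤ) ≤ k), ?_⟩
    subst hx hy; push_cast; simp

lemma walk_disp (hT : T ⊆ hamPowerEdges n k σ) {S : Set (ZMod n)} {x y : ↥S}
    (p : ((SimpleGraph.fromEdgeSet (↑T : Set (Sym2 (ZMod n)))).induce S).Walk x y) :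
    ∃ d : ℤ, |d| ≤ k * p.length ∧ (d : ZMod n) = σ.symm ↑y - σ.symm ↑x := by
  induction p with
  | nil => exact ⟨0, by simp, by simp⟩
  | @cons u v w h p ih =>
    obtain ⟨d2, hd2, hc2⟩ := ih
    obtain ⟨d1, hd1, hc1⟩ := adj_step hT (SimpleGraph.comap_adj.mp h)
    refine ⟨d1 + d2, ?_, ?_⟩
    · calc |d1 + d2| ≤ |d1| + |d2| := abs_add_le _ _
        _ ≤ k * (p.length + 1) := by linarith
      -- length of cons
    · simp only [Function.Embedding.coe_subtype] at hc1
      push_cast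
      rw [hc1, hc2]; ring
  
lemma reach_disp (hT : T ⊆ hamPowerEdges n k σ) {S : Set (ZMod n)} {x y : ↥S}
    (hr : ((SimpleGraph.fromEdgeSet (↑T : Set (Sym2 (ZMod n)))).induce S).Reachable x y) :
    ∃ d : ℤ, |d| ≤ k * T.card ∧ (d : ZMod n) = σ.symm ↑y - σ.symm ↑x := by
  obtain ⟨p0⟩ := hr
  classical
  let q := p0.toPath
  have hnd : q.1.edges.Nodup := q.2.isTrail.edges_nodup
  have hmap : ((q.1.edges.map (Sym2.map (Subtype.val)))).Nodup :=
    hnd.map (Sym2.map.injective Subtype.val_injective)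
  have hsub : ((q.1.edges.map (Sym2.map (Subtype.val)))).toFinset ⊆ T := by
    intro e he
    rw [List.mem_toFinset, List.mem_map] at he
    obtain ⟨e', he', rfl⟩ := he
    have hes := q.1.edges_subset_edgeSet he'
    induction e' with
    | _ a b =>
      rw [SimpleGraph.mem_edgeSet] at hes
      have : (SimpleGraph.fromEdgeSet (↑T : Set (Sym2 (ZMod n)))).Adj ↑a ↑b := SimpleGraph.comap_adj.mp hes
      rw [SimpleGraph.fromEdgeSet_adj] at this
      simpa using this.1
  have hlen : q.1.length ≤ T.card := by
    calc q.1.length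
        = ((q.1.edges.map (Sym2.map (Subtype.val)))).toFinset.card := by
          rw [List.toFinset_card_of_nodup hmap, List.length_map, SimpleGraph.Walk.length_edges]
      _ ≤ T.card := Finset.card_le_card hsub
  obtain ⟨d, hd, hc⟩ := walk_disp hT q.1
  exact ⟨d, le_trans hd (by exact_mod_cast Nat.mul_le_mul_left k hlen), hc⟩
end aux
lemma castInj {n : ℕ} [NeZero n] {d : ℤ} (hd : (d : ZMod n) = 0) (h : |d| < n) : d = 0 :=
  Int.eq_zero_of_abs_lt_dvd ((ZMod.intCast_zmod_eq_zero_iff_dvd d n).mp hd) (by exact_mod_cast h)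

/-- Let `T` be a set of `t ≤ n/(3k)` edges of the `k`-th power of some
Hamilton cycle on `[n]`, inducing a subgraph with `c` connected components and `v` vertices.
Then `t ≤ kv − (2k−1)c`. -/
theorem stmt7 (n k : ℕ) [NeZero n] (hk : 1 ≤ k) (σ : Equiv.Perm (ZMod n))
    (T : Finset (Sym2 (ZMod n))) (hT : T ⊆ hamPowerEdges n k σ)
    (t c v : ℕ) (ht : t = T.card) (hsmall : 3 * k * t ≤ n)
    (hc : c = numComponents T) (hv : v = (edgeSupport T).ncard) :
    t + (2 * k - 1) * c ≤ k * v := by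
  -- notation
  set S : Set (ZMod n) := edgeSupport T with hS
  set G := SimpleGraph.fromEdgeSet (↑T : Set (Sym2 (ZMod n))) with hG
  set H := G.induce S with hH
  -- case t = 0
  rcases Nat.eq_zero_or_pos t with h0 | hpos
  · have hT0 : T = ∅ := Finset.card_eq_zero.mp (by omega)
    have hc0 : c = 0 := by
      rw [hc]
      unfold numComponents
      have hIE : IsEmpty ↥(edgeSupport T) := by
        rw [hT0]
        constructor
        rintro ⟨x, e, he, -⟩
        simp at he
      have hIE2 : IsEmpty ((SimpleGraph.fromEdgeSet (↑T : Set (Sym2 (ZMod n)))).induce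
          (edgeSupport T)).ConnectedComponent := by
        constructor
        intro x
        induction x using SimpleGraph.ConnectedComponent.ind with
        | _ v => exact isEmptyElim v
      exact @Nat.card_of_isEmpty _ hIE2
    rw [h0, hc0]
    simp
  -- facts
  have hkn : k < n := by
    have h3 : 3 * k * 1 ≤ 3 * k * t := Nat.mul_le_mul_left _ hpos
    omega
  have hrep : ∀ e : Sym2 (ZMod n), ∃ (i : ZMod n) (j : ℕ), e ∈ T →
      (1 ≤ j ∧ j ≤ k ∧ e = s(σ i, σ (i + (j : ZMod n)))) := by
    intro e
    by_cases he : e ∈ T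
    · have h2 := hT he
      simp only [hamPowerEdges, Finset.mem_filter] at h2
      obtain ⟨-, i, j, h1, h2, h3⟩ := h2
      exact ⟨i, j, fun _ => ⟨h1, h2, h3⟩⟩
    · exact ⟨0, 0, fun h => absurd h he⟩
  choose I J hIJ using hrep
  have hJ1 : ∀ e ∈ T, 1 ≤ J e := fun e he => (hIJ e he).1
  have hJk : ∀ e ∈ T, J e ≤ k := fun e he => (hIJ e he).2.1
  have hEq : ∀ e ∈ T, e = s(σ (I e), σ (I e + (J e : ZMod n))) := fun e he => (hIJ e he).2.2
  have hJnz : ∀ e ∈ T, ((J e : ZMod n)) ≠ 0 := by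
    intro e he h
    rw [ZMod.natCast_eq_zero_iff] at h
    have := Nat.le_of_dvd (hJ1 e he) h
    have := hJk e he
    omega
  have hneq : ∀ e ∈ T, σ (I e) ≠ σ (I e + (J e : ZMod n)) := by
    intro e he h
    exact hJnz e he (by have := σ.injective h; simpa using this.symm)
  have hmem1 : ∀ e ∈ T, σ (I e) ∈ S := by
    intro e he
    refine ⟨e, he, ?_⟩
    obtain h3 := hEq e he
    set a := I e with ha
    set b := J e with hb
    rw [h3]; simp
  have hmem2 : ∀ e ∈ T, σ (I e + (J e : ZMod n)) ∈ S := by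
    intro e he
    refine ⟨e, he, ?_⟩
    obtain h3 := hEq e he
    set a := I e with ha
    set b := J e with hb
    rw [h3]; simp
  -- adjacency of endpoints in H
  have hadjH : ∀ (x y : ZMod n) (hx : x ∈ S) (hy : y ∈ S), s(x,y) ∈ T → x ≠ y →
      H.Adj ⟨x, hx⟩ ⟨y, hy⟩ := by
    intro x y hx hy hxy hne
    rw [hH]
    exact SimpleGraph.comap_adj.mpr (by rw [hG, SimpleGraph.fromEdgeSet_adj]; exact ⟨by exact_mod_cast hxy, hne⟩)
  -- nonempty support
  obtain ⟨e0, he0⟩ : T.Nonempty := by rw [← Finset.card_pos, ← ht]; omega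
  haveI hSne : Nonempty ↥S := ⟨⟨σ (I e0), hmem1 e0 he0⟩⟩
  haveI : Fintype ↥S := Set.Finite.fintype (Set.toFinite S)
  haveI : Fintype H.ConnectedComponent := Fintype.ofFinite _
  haveI hCne : Nonempty H.ConnectedComponent := ⟨H.connectedComponentMk (Classical.arbitrary _)⟩
  -- component assignment function
  set vc : ZMod n → H.ConnectedComponent :=
    fun x => if hx : x ∈ S then H.connectedComponentMk ⟨x, hx⟩ else Classical.arbitrary _ with hvc
  have hvcS : ∀ (x : ZMod n) (hx : x ∈ S), vc x = H.connectedComponentMk ⟨x, hx⟩ := by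
    intro x hx; rw [hvc]; exact dif_pos hx
  have hvcadj : ∀ x y : ZMod n, x ∈ S → y ∈ S → s(x,y) ∈ T → x ≠ y → vc x = vc y := by
    intro x y hx hy hxy hne
    rw [hvcS x hx, hvcS y hy]
    exact SimpleGraph.ConnectedComponent.eq.mpr (hadjH x y hx hy hxy hne).reachable
  have hsame : ∀ e ∈ T, vc (σ (I e)) = vc (σ (I e + (J e : ZMod n))) := by
    intro e he
    exact hvcadj _ _ (hmem1 e he) (hmem2 e he) (by rw [← hEq e he]; exact he) (hneq e he)
  -- case t = 1
  rcases Nat.lt_or_ge t 2 with h1 | h2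
  · have ht1 : T.card = 1 := by omega
    obtain ⟨e1, hTe⟩ := Finset.card_eq_one.mp ht1
    have he1 : e1 ∈ T := by rw [hTe]; exact Finset.mem_singleton_self e1
    have hSeq : S = {σ (I e1), σ (I e1 + (J e1 : ZMod n))} := by
      rw [hS]
      ext x
      simp only [edgeSupport, Set.mem_setOf_eq, hTe, Finset.mem_singleton, Set.mem_insert_iff,
        Set.mem_singleton_iff]
      constructor
      · rintro ⟨e, rfl, hx⟩
        rw [hEq e he1] at hx
        exact Sym2.mem_iff.mp hx
      · rintro (rfl | rfl)
        · refine ⟨e1, rfl, ?_⟩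
          obtain h3 := hEq e1 he1
          set a := I e1 with ha
          set bb := J e1 with hbb
          rw [h3]; simp
        · refine ⟨e1, rfl, ?_⟩
          obtain h3 := hEq e1 he1
          set a := I e1 with ha
          set bb := J e1 with hbb
          rw [h3]; simp
    have hv2 : v = 2 := by rw [hv, hSeq]; exact Set.ncard_pair (hneq e1 he1)
    have hadj := hadjH _ _ (hmem1 e1 he1) (hmem2 e1 he1)
      (by rw [← hEq e1 he1]; exact he1) (hneq e1 he1)
    have hcase : ∀ x : ↥S, x = (⟨σ (I e1), hmem1 e1 he1⟩ : ↥S) ∨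
        x = ⟨σ (I e1 + (J e1 : ZMod n)), hmem2 e1 he1⟩ := by
      intro x
      have hx := (Set.ext_iff.mp hSeq ↑x).mp x.2
      rw [Set.mem_insert_iff, Set.mem_singleton_iff] at hx
      rcases hx with h | h
      · left; exact Subtype.ext h
      · right; exact Subtype.ext h
    have hsub : Subsingleton H.ConnectedComponent := by
      constructor
      intro x y
      induction x using SimpleGraph.ConnectedComponent.ind with
      | _ vx =>
      induction y using SimpleGraph.ConnectedComponent.ind with
      | _ vy =>
      rcases hcase vx with rfl | rfl <;> rcases hcase vy with rfl | rfl
      · rfl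
      · exact SimpleGraph.ConnectedComponent.eq.mpr hadj.reachable
      · exact SimpleGraph.ConnectedComponent.eq.mpr hadj.symm.reachable
      · rfl
    have hc1 : c ≤ 1 := by
      rw [hc]
      unfold numComponents
      exact Finite.card_le_one_iff_subsingleton.mpr hsub
    have hmul := Nat.mul_le_mul_left (2 * k - 1) hc1
    have ht1' : t = 1 := by omega
    rw [ht1', hv2]
    omega
  -- main case
  have key : ∀ C : H.ConnectedComponent,
      (T.filter fun e => vc (σ (I e)) = C).card + (2 * k - 1)
        ≤ k * (S.toFinset.filter fun x => vc x = C).card := by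
    intro C
    obtain ⟨w, hw⟩ := C.exists_rep
    set b : ZMod n := ↑w with hb
    have hbS : b ∈ S := w.2
    set F := S.toFinset.filter (fun x => vc x = C) with hF
    have hmemF : ∀ x : ZMod n, x ∈ F ↔ x ∈ S ∧ vc x = C := by
      intro x; rw [hF, Finset.mem_filter, Set.mem_toFinset]
    have hbF : b ∈ F := by
      rw [hmemF]
      refine ⟨hbS, ?_⟩
      rw [hvcS b hbS]
      have hwb : (⟨b, hbS⟩ : ↥S) = w := Subtype.ext rfl
      rw [hwb]; exact hw
    -- heights
    have hreach : ∀ x : ZMod n, ∃ d : ℤ, x ∈ F →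
        (|d| ≤ (k : ℤ) * t ∧ (d : ZMod n) = σ.symm x - σ.symm b) := by
      intro x
      by_cases hx : x ∈ F
      · obtain ⟨hxS, hxC⟩ := (hmemF x).mp hx
        have hmk : H.connectedComponentMk ⟨x, hxS⟩ = C := by rw [← hvcS x hxS]; exact hxC
        have hr : H.Reachable w ⟨x, hxS⟩ :=
          SimpleGraph.ConnectedComponent.eq.mp (hw.trans hmk.symm)
        rw [hH, hG] at hr
        obtain ⟨d, hd1, hd2⟩ := reach_disp hT hr
        refine ⟨d, fun _ => ⟨?_, by simpa using hd2⟩⟩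
        rw [ht]; exact_mod_cast hd1
      · exact ⟨0, fun h => absurd h hx⟩
    choose h hhF using hreach
    have hbound : ∀ x ∈ F, |h x| ≤ (k : ℤ) * t := fun x hx => (hhF x hx).1
    have hcast : ∀ x ∈ F, ((h x : ZMod n)) = σ.symm x - σ.symm b := fun x hx => (hhF x hx).2
    have hinj : ∀ x ∈ F, ∀ y ∈ F, h x = h y → x = y := by
      intro x hx y hy hxy
      have h4 := hcast x hx
      rw [hxy, hcast y hy] at h4
      exact (σ.symm.injective (sub_left_inj.mp h4)).symm
    obtain ⟨M, hMF, hMmax⟩ := Finset.exists_max_image F h ⟨b, hbF⟩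
    have hMS : M ∈ S := ((hmemF M).mp hMF).1
    have hMC : vc M = C := ((hmemF M).mp hMF).2
    obtain ⟨e1, he1, hMe1⟩ : ∃ e ∈ T, M ∈ e := hMS
    have hMcases : M = σ (I e1) ∨ M = σ (I e1 + (J e1 : ZMod n)) := by
      rw [hEq e1 he1] at hMe1
      exact Sym2.mem_iff.mp hMe1
    -- step lemma
    have step : ∀ e ∈ T, vc (σ (I e)) = C →
        σ (I e) ∈ F ∧ σ (I e + (J e : ZMod n)) ∈ F ∧
          h (σ (I e + (J e : ZMod n))) = h (σ (I e)) + (J e : ℤ) := by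
      intro e he hC
      have hx : σ (I e) ∈ F := (hmemF _).mpr ⟨hmem1 e he, hC⟩
      have hyC : vc (σ (I e + (J e : ZMod n))) = C := by rw [← hsame e he]; exact hC
      have hy : σ (I e + (J e : ZMod n)) ∈ F := (hmemF _).mpr ⟨hmem2 e he, hyC⟩
      refine ⟨hx, hy, ?_⟩
      have hd : ((h (σ (I e + (J e : ZMod n))) - h (σ (I e)) - (J e : ℤ) : ℤ) : ZMod n) = 0 := by
        push_cast
        rw [hcast _ hy, hcast _ hx]
        simp only [Equiv.symm_apply_apply]
        ring
      have hnZ : (3:ℤ) * k * t ≤ n := by exact_mod_cast hsmall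
      have hktZ : (k:ℤ) * 2 ≤ (k:ℤ) * t := by
        have := Nat.mul_le_mul_left k h2; exact_mod_cast this
      have hkZ : (1:ℤ) ≤ k := by exact_mod_cast hk
      have hJ1Z : (1:ℤ) ≤ (J e : ℤ) := by exact_mod_cast hJ1 e he
      have hJkZ : (J e : ℤ) ≤ k := by exact_mod_cast hJk e he
      have hb1 := abs_le.mp (hbound _ hy)
      have hb2 := abs_le.mp (hbound _ hx)
      have h6 := castInj hd (by rw [abs_lt]; constructor <;> linarith)
      linarith
    -- second vertex
    obtain ⟨M', hM'F, hM'ne⟩ : ∃ x, x ∈ F ∧ x ≠ M := by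
      rcases hMcases with h4 | h4
      · have hIc : vc (σ (I e1)) = C := by rw [← h4]; exact hMC
        obtain ⟨-, hyF, -⟩ := step e1 he1 hIc
        exact ⟨σ (I e1 + (J e1 : ZMod n)), hyF, by rw [h4]; exact (hneq e1 he1).symm⟩
      · have hIc : vc (σ (I e1)) = C := by rw [hsame e1 he1, ← h4]; exact hMC
        obtain ⟨hxF, -, -⟩ := step e1 he1 hIc
        exact ⟨σ (I e1), hxF, by rw [h4]; exact (hneq e1 he1)⟩
    have herase : (F.erase M).Nonempty := ⟨M', Finset.mem_erase.mpr ⟨hM'ne, hM'F⟩⟩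
    obtain ⟨M₂, hM₂e, hM₂max⟩ := Finset.exists_max_image (F.erase M) h herase
    have hM₂F : M₂ ∈ F := (Finset.mem_erase.mp hM₂e).2
    have hM₂ne : M₂ ≠ M := (Finset.mem_erase.mp hM₂e).1
    set jM := (h M - h M₂).toNat with hjM
    set P := F ×ˢ Finset.Icc 1 k with hP
    set B := ({M} ×ˢ Finset.Icc 1 k) ∪ ({M₂} ×ˢ (Finset.Icc 1 k \ {jM})) with hB
    have hBP : B ⊆ P := by
      intro p hp
      rw [hB, Finset.mem_union] at hp
      rw [hP, Finset.mem_product]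
      rcases hp with hp | hp <;> rw [Finset.mem_product, Finset.mem_singleton] at hp
      · exact ⟨hp.1 ▸ hMF, hp.2⟩
      · exact ⟨hp.1 ▸ hM₂F, (Finset.mem_sdiff.mp hp.2).1⟩
    have hBcard : 2 * k - 1 ≤ B.card := by
      have hdis : Disjoint ({M} ×ˢ Finset.Icc 1 k) ({M₂} ×ˢ (Finset.Icc 1 k \ {jM})) := by
        rw [Finset.disjoint_left]
        intro p hp hp2
        rw [Finset.mem_product, Finset.mem_singleton] at hp hp2
        exact hM₂ne (hp2.1 ▸ hp.1 ▸ rfl)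
      have hsd : (Finset.Icc 1 k).card ≤ (Finset.Icc 1 k \ {jM}).card + ({jM} : Finset ℕ).card := by
        rw [Finset.card_sdiff_add_card]
        exact Finset.card_le_card Finset.subset_union_left
      rw [Finset.card_singleton, Nat.card_Icc] at hsd
      simp only [hB, Finset.card_union_of_disjoint hdis, Finset.card_product,
        Finset.card_singleton, Nat.card_Icc, one_mul]
      omega
    have himg : ∀ e ∈ T.filter (fun e => vc (σ (I e)) = C),
        (σ (I e), J e) ∈ P \ B := by
      intro e he'
      rw [Finset.mem_filter] at he'
      obtain ⟨he, heC⟩ := he'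
      obtain ⟨hxF, hyF, hstep⟩ := step e he heC
      rw [Finset.mem_sdiff, hP, Finset.mem_product]
      refine ⟨⟨hxF, Finset.mem_Icc.mpr ⟨hJ1 e he, hJk e he⟩⟩, ?_⟩
      intro hBmem
      rw [hB, Finset.mem_union] at hBmem
      rcases hBmem with h4 | h4
      · simp only [Finset.mem_product, Finset.mem_singleton] at h4
        have h5 := hMmax _ hyF
        rw [hstep, h4.1] at h5
        have := hJ1 e he; omega
      · simp only [Finset.mem_product, Finset.mem_singleton, Finset.mem_sdiff] at h4
        obtain ⟨h41, -, h42⟩ := h4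
        by_cases hyM : σ (I e + (J e : ZMod n)) = M
        · apply h42
          rw [hyM, h41] at hstep
          omega
        · have h5 : σ (I e + (J e : ZMod n)) ∈ F.erase M := Finset.mem_erase.mpr ⟨hyM, hyF⟩
          have h6 := hM₂max _ h5
          rw [hstep, h41] at h6
          have := hJ1 e he; omega
    have hinjphi : Set.InjOn (fun e => (σ (I e), J e)) ↑(T.filter (fun e => vc (σ (I e)) = C)) := by
      intro e he e' he' hphi
      simp only [Prod.mk.injEq] at hphi
      rw [Finset.mem_coe, Finset.mem_filter] at he he'
      have hI : I e = I e' := σ.injective hphi.1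
      rw [hEq e he.1, hEq e' he'.1, hI, hphi.2]
    calc (T.filter fun e => vc (σ (I e)) = C).card + (2 * k - 1)
        ≤ (T.filter fun e => vc (σ (I e)) = C).card + B.card := by omega
      _ = ((T.filter fun e => vc (σ (I e)) = C).image (fun e => (σ (I e), J e))).card + B.card := by
          rw [Finset.card_image_of_injOn hinjphi]
      _ ≤ (P \ B).card + B.card := by
          have := Finset.card_le_card (Finset.image_subset_iff.mpr himg)
          omega
      _ = P.card := by rw [Finset.card_sdiff_add_card_eq_card hBP]
      _ = k * F.card := by
          rw [hP, Finset.card_product, Nat.card_Icc, Nat.add_sub_cancel, Nat.mul_comm]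
  -- assemble
  have ht' : t = ∑ C : H.ConnectedComponent, (T.filter fun e => vc (σ (I e)) = C).card := by
    rw [ht]; exact Finset.card_eq_sum_card_fiberwise (fun e _ => Finset.mem_univ _)
  have hv' : v = ∑ C : H.ConnectedComponent, (S.toFinset.filter fun x => vc x = C).card := by
    rw [hv, Set.ncard_eq_toFinset_card']
    exact Finset.card_eq_sum_card_fiberwise (fun x _ => Finset.mem_univ _)
  have hc' : c = Fintype.card H.ConnectedComponent := by
    rw [hc, numComponents, Nat.card_eq_fintype_card]
  calc t + (2 * k - 1) * c
      = ∑ C : H.ConnectedComponent, ((T.filter fun e => vc (σ (I e)) = C).card + (2 * k - 1)) := by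
        rw [Finset.sum_add_distrib, ← ht', Finset.sum_const, Finset.card_univ, ← hc',
          smul_eq_mul, Nat.mul_comm]
    _ ≤ ∑ C : H.ConnectedComponent, k * (S.toFinset.filter fun x => vc x = C).card :=
        Finset.sum_le_sum (fun C _ => key C)
    _ = k * v := by rw [hv', Finset.mul_sum]

end
end

section
/- In any graph G of maximum degree Δ, the number of connected subgraphs with t vertices containing a fixed root vertex v is at most (Δe)^{t−1}. -/
open Finset

attribute [local instance] Classical.propDecidable

namespace Stmt13Aux

variable {V : Type*}

/-- index of first vertex in `L` adjacent to `x`. -/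
noncomputable def pIdx (G : SimpleGraph V) (L : List V) (x : V) : ℕ :=
  L.findIdx (fun u => decide (G.Adj u x))

/-- code of a candidate vertex `x` w.r.t. explored list `L`. -/
noncomputable def vcode (G : SimpleGraph V) (Δ : ℕ) (ℓ : V → V → ℕ) (L : List V) (x : V) : ℕ :=
  Δ * pIdx G L x + ℓ (L.getD (pIdx G L x) x) x

/-- the set of unexplored vertices of `S` adjacent to the explored list. -/
noncomputable def cand (G : SimpleGraph V) (S : Finset V) (L : List V) : Finset V :=
  S.filter (fun x => x ∉ L ∧ ∃ u ∈ L, G.Adj u x)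

/-- next vertex: candidate of minimal code. -/
noncomputable def nxt (G : SimpleGraph V) (Δ : ℕ) (ℓ : V → V → ℕ) (S : Finset V) (v : V)
    (L : List V) : V :=
  if h : (cand G S L).Nonempty then
    (Finset.exists_min_image (cand G S L) (vcode G Δ ℓ L) h).choose else v

/-- exploration lists. -/
noncomputable def explore (G : SimpleGraph V) (Δ : ℕ) (ℓ : V → V → ℕ) (S : Finset V) (v : V) :
    ℕ → List V
  | 0 => [v]
  | (k+1) => explore G Δ ℓ S v k ++ [nxt G Δ ℓ S v (explore G Δ ℓ S v k)]

variable {G : SimpleGraph V} {Δ : ℕ} {ℓ : V → V → ℕ} {S : Finset V} {v : V} {L M : List V} {x y : V}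

lemma pIdx_lt (h : ∃ u ∈ L, G.Adj u x) : pIdx G L x < L.length := by
  apply List.findIdx_lt_length_of_exists
  obtain ⟨u, hu, hadj⟩ := h
  exact ⟨u, hu, by simpa using hadj⟩

lemma adj_pIdx (h : ∃ u ∈ L, G.Adj u x) : G.Adj (L.getD (pIdx G L x) x) x := by
  have hlt := pIdx_lt h
  rw [List.getD_eq_getElem _ _ hlt]
  have := @List.findIdx_getElem _ (fun u => decide (G.Adj u x)) L hlt
  exact of_decide_eq_true this

lemma pIdx_append (h : ∃ u ∈ L, G.Adj u x) : pIdx G (L ++ M) x = pIdx G L x := by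
  have hlt : List.findIdx (fun u => decide (G.Adj u x)) L < L.length := pIdx_lt h
  unfold pIdx
  rw [List.findIdx_append, if_pos hlt]

lemma vcode_append (h : ∃ u ∈ L, G.Adj u x) :
    vcode G Δ ℓ (L ++ M) x = vcode G Δ ℓ L x := by
  unfold vcode
  rw [pIdx_append h, List.getD_append _ _ _ _ (pIdx_lt h)]

lemma vcode_lt (h : ∃ u ∈ L, G.Adj u x) (hb : ∀ a b, G.Adj a b → ℓ a b < Δ) :
    vcode G Δ ℓ L x < Δ * L.length := by
  have h1 := pIdx_lt h
  have h2 := hb _ _ (adj_pIdx h)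
  unfold vcode
  calc Δ * pIdx G L x + ℓ (L.getD (pIdx G L x) x) x < Δ * pIdx G L x + Δ := by omega
    _ = Δ * (pIdx G L x + 1) := by ring
    _ ≤ Δ * L.length := Nat.mul_le_mul_left _ (by omega)

lemma vcode_inj (hΔ : 0 < Δ) (hb : ∀ a b, G.Adj a b → ℓ a b < Δ)
    (hinj : ∀ w, Set.InjOn (ℓ w) (G.neighborSet w))
    (hx : ∃ u ∈ L, G.Adj u x) (hy : ∃ u ∈ L, G.Adj u y)
    (hc : vcode G Δ ℓ L x = vcode G Δ ℓ L y) : x = y := by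
  have hax := adj_pIdx hx
  have hay := adj_pIdx hy
  have hbx := hb _ _ hax
  have hby := hb _ _ hay
  unfold vcode at hc
  have hp : pIdx G L x = pIdx G L y := by
    have e1 : (Δ * pIdx G L x + ℓ (L.getD (pIdx G L x) x) x) / Δ = pIdx G L x := by
      rw [Nat.mul_add_div hΔ, Nat.div_eq_of_lt hbx, Nat.add_zero]
    have e2 : (Δ * pIdx G L y + ℓ (L.getD (pIdx G L y) y) y) / Δ = pIdx G L y := by
      rw [Nat.mul_add_div hΔ, Nat.div_eq_of_lt hby, Nat.add_zero]
    rw [← e1, ← e2, hc]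
  have hsame : L.getD (pIdx G L x) x = L.getD (pIdx G L y) y := by
    rw [List.getD_eq_getElem _ _ (pIdx_lt hx), List.getD_eq_getElem _ _ (pIdx_lt hy)]
    congr 1
  set u := L.getD (pIdx G L x) x with hu
  have hlab : ℓ u x = ℓ u y := by
    rw [hp, ← hsame] at hc
    omega
  have hyu : G.Adj u y := by rw [hsame]; exact hay
  exact hinj u (by simpa using hax) (by simpa using hyu) hlab

/-- Cut lemma: a connected induced subgraph has an edge leaving any proper subset. -/
lemma cut (hconn : (G.induce (↑S : Set V)).Connected) {A : Finset V} (hAS : A ⊆ S)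
    {a : V} (ha : a ∈ A) (hx : x ∈ S) (hxA : x ∉ A) :
    ∃ u ∈ A, ∃ z ∈ S, z ∉ A ∧ G.Adj u z := by
  have ha' : a ∈ S := hAS ha
  obtain ⟨w⟩ := hconn.preconnected ⟨a, ha'⟩ ⟨x, hx⟩
  obtain ⟨d, _, hd1, hd2⟩ :=
    w.exists_boundary_dart {y : (↑S : Set V) | (y : V) ∈ A} ha hxA
  refine ⟨d.toProd.1, hd1, d.toProd.2, d.toProd.2.2, hd2, ?_⟩
  exact d.adj

lemma nxt_spec (h : (cand G S L).Nonempty) :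
    nxt G Δ ℓ S v L ∈ cand G S L ∧
      ∀ y ∈ cand G S L, vcode G Δ ℓ L (nxt G Δ ℓ S v L) ≤ vcode G Δ ℓ L y := by
  rw [nxt, dif_pos h]
  exact (Finset.exists_min_image (cand G S L) (vcode G Δ ℓ L) h).choose_spec

lemma mem_cand (hx : x ∈ cand G S L) : x ∈ S ∧ x ∉ L ∧ ∃ u ∈ L, G.Adj u x := by
  simpa [cand] using hx

lemma explore_prefix (k m : ℕ) (h : k ≤ m) :
    explore G Δ ℓ S v k <+: explore G Δ ℓ S v m := by
  induction m with
  | zero => simpa [Nat.le_zero.mp h]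
  | succ m ih =>
    rcases Nat.lt_or_ge k (m+1) with h' | h'
    · exact (ih (by omega)).trans ⟨_, rfl⟩
    · have : k = m + 1 := by omega
      subst this; exact List.prefix_rfl

lemma mem_explore_self (k : ℕ) : v ∈ explore G Δ ℓ S v k :=
  List.IsPrefix.mem (by simp [explore]) (explore_prefix 0 k (Nat.zero_le _))

section Good

variable {n : ℕ}

lemma explore_good (hv : v ∈ S) (hcard : S.card = n + 1)
    (hconn : (G.induce (↑S : Set V)).Connected) :
    ∀ k, k ≤ n → (explore G Δ ℓ S v k).length = k + 1 ∧ (explore G Δ ℓ S v k).Nodup ∧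
      ∀ x ∈ explore G Δ ℓ S v k, x ∈ S := by
  intro k
  induction k with
  | zero => intro _; refine ⟨rfl, List.nodup_singleton v, ?_⟩; simpa [explore] using hv
  | succ k ih =>
    intro hk
    obtain ⟨hlen, hnd, hsub⟩ := ih (by omega)
    set L := explore G Δ ℓ S v k with hL
    have hA : L.toFinset ⊆ S := fun z hz => hsub z (List.mem_toFinset.mp hz)
    have hcardA : L.toFinset.card < S.card := by
      rw [List.toFinset_card_of_nodup hnd, hlen, hcard]; omega
    obtain ⟨x0, hx0S, hx0A⟩ := Finset.exists_of_ssubset (hA.ssubset_of_ne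
      (fun h => by rw [h] at hcardA; omega))
    obtain ⟨u, hu, z, hzS, hzA, hadj⟩ := cut hconn hA
      (List.mem_toFinset.mpr (mem_explore_self k)) hx0S hx0A
    have hzc : z ∈ cand G S L := by
      simp only [cand, Finset.mem_filter]
      exact ⟨hzS, fun h => hzA (List.mem_toFinset.mpr h), u, List.mem_toFinset.mp hu, hadj⟩
    have hcne : (cand G S L).Nonempty := ⟨z, hzc⟩
    obtain ⟨hmem, -⟩ := nxt_spec (Δ := Δ) (ℓ := ℓ) (v := v) hcne
    obtain ⟨hnS, hnL, -⟩ := mem_cand hmem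
    refine ⟨by simp [explore, ← hL, hlen], ?_, ?_⟩
    · rw [explore, ← hL, List.nodup_append]
      exact ⟨hnd, List.nodup_singleton _, by simpa using fun a (ha : a ∈ L) (h : a = nxt G Δ ℓ S v L) => hnL (h ▸ ha)⟩
    · intro x hx
      rw [explore, ← hL, List.mem_append] at hx
      rcases hx with hx | hx
      · exact hsub x hx
      · simp only [List.mem_singleton] at hx; subst hx; exact hnS

lemma cand_explore_nonempty (hv : v ∈ S) (hcard : S.card = n + 1)
    (hconn : (G.induce (↑S : Set V)).Connected) {k : ℕ} (hk : k < n) :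
    (cand G S (explore G Δ ℓ S v k)).Nonempty := by
  obtain ⟨hlen, hnd, hsub⟩ := explore_good (Δ := Δ) (ℓ := ℓ) hv hcard hconn k (by omega)
  set L := explore G Δ ℓ S v k with hL
  have hA : L.toFinset ⊆ S := fun z hz => hsub z (List.mem_toFinset.mp hz)
  have hcardA : L.toFinset.card < S.card := by
    rw [List.toFinset_card_of_nodup hnd, hlen, hcard]; omega
  obtain ⟨x0, hx0S, hx0A⟩ := Finset.exists_of_ssubset (hA.ssubset_of_ne
    (fun h => by rw [h] at hcardA; omega))
  obtain ⟨u, hu, z, hzS, hzA, hadj⟩ := cut hconn hA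
    (List.mem_toFinset.mpr (mem_explore_self k)) hx0S hx0A
  have hzc : z ∈ cand G S (explore G Δ ℓ S v k) := by
    simp only [cand, Finset.mem_filter, ← hL]
    exact ⟨hzS, fun h => hzA (List.mem_toFinset.mpr h), u, List.mem_toFinset.mp hu, hadj⟩
  exact ⟨z, hzc⟩

/-- the code of the `k`-th discovered vertex. -/
noncomputable def ecode (G : SimpleGraph V) (Δ : ℕ) (ℓ : V → V → ℕ) (S : Finset V) (v : V)
    (k : ℕ) : ℕ :=
  vcode G Δ ℓ (explore G Δ ℓ S v k) (nxt G Δ ℓ S v (explore G Δ ℓ S v k))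

lemma ecode_lt (hb : ∀ a b, G.Adj a b → ℓ a b < Δ) (hv : v ∈ S) (hcard : S.card = n + 1)
    (hconn : (G.induce (↑S : Set V)).Connected) {k : ℕ} (hk : k < n) :
    ecode G Δ ℓ S v k < Δ * (k + 1) := by
  obtain ⟨hmem, -⟩ := nxt_spec (Δ := Δ) (ℓ := ℓ) (v := v)
    (cand_explore_nonempty hv hcard hconn hk)
  obtain ⟨-, -, hadj⟩ := mem_cand hmem
  have := vcode_lt (Δ := Δ) (ℓ := ℓ) hadj hb
  rwa [(explore_good (Δ := Δ) (ℓ := ℓ) hv hcard hconn k (by omega)).1] at this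

lemma step_lt (hΔ : 0 < Δ) (hb : ∀ a b, G.Adj a b → ℓ a b < Δ)
    (hinj : ∀ w, Set.InjOn (ℓ w) (G.neighborSet w)) {L : List V}
    (h1 : (cand G S L).Nonempty)
    (h2 : (cand G S (L ++ [nxt G Δ ℓ S v L])).Nonempty) :
    vcode G Δ ℓ L (nxt G Δ ℓ S v L) <
      vcode G Δ ℓ (L ++ [nxt G Δ ℓ S v L]) (nxt G Δ ℓ S v (L ++ [nxt G Δ ℓ S v L])) := by
  obtain ⟨hmemk, hmink⟩ := nxt_spec h1
  obtain ⟨hxkS, hxkL, hxkadj⟩ := mem_cand hmemk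
  obtain ⟨hmem1, -⟩ := nxt_spec h2
  obtain ⟨hxS, hxL1, hxadj1⟩ := mem_cand hmem1
  set xk := nxt G Δ ℓ S v L with hxkdef
  set x := nxt G Δ ℓ S v (L ++ [xk]) with hxdef
  by_cases hadj : ∃ u ∈ L, G.Adj u x
  · have hxcand : x ∈ cand G S L := by
      simp only [cand, Finset.mem_filter]
      exact ⟨hxS, fun h => hxL1 (List.mem_append_left _ h), hadj⟩
    have hge := hmink x hxcand
    have hne : vcode G Δ ℓ L xk ≠ vcode G Δ ℓ L x := by
      intro h
      have hxx : x = xk := vcode_inj hΔ hb hinj hadj hxkadj h.symm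
      exact hxL1 (List.mem_append_right _ (by simp [hxx]))
    rw [vcode_append hadj]
    omega
  · have hpge : pIdx G (L ++ [xk]) x ≥ L.length := by
      unfold pIdx
      rw [List.findIdx_append]
      split
      · next hlt =>
        exfalso
        apply hadj
        have := @List.findIdx_getElem _ (fun u => decide (G.Adj u x)) L hlt
        exact ⟨_, List.getElem_mem _, by simpa using this⟩
      · omega
    have hlt := vcode_lt (Δ := Δ) (ℓ := ℓ) hxkadj hb
    calc vcode G Δ ℓ L xk < Δ * L.length := hlt
      _ ≤ Δ * pIdx G (L ++ [xk]) x := Nat.mul_le_mul_left _ hpge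
      _ ≤ _ := Nat.le_add_right _ _

lemma ecode_succ_lt (hΔ : 0 < Δ) (hb : ∀ a b, G.Adj a b → ℓ a b < Δ)
    (hinj : ∀ w, Set.InjOn (ℓ w) (G.neighborSet w))
    (hv : v ∈ S) (hcard : S.card = n + 1)
    (hconn : (G.induce (↑S : Set V)).Connected) {k : ℕ} (hk : k + 1 < n) :
    ecode G Δ ℓ S v k < ecode G Δ ℓ S v (k + 1) := by
  have h1 := cand_explore_nonempty (Δ := Δ) (ℓ := ℓ) hv hcard hconn (show k < n by omega)
  have h2 := cand_explore_nonempty (Δ := Δ) (ℓ := ℓ) hv hcard hconn hk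
  simp only [explore] at h2
  simp only [ecode, explore]
  exact step_lt hΔ hb hinj h1 h2

lemma ecode_strictMono (hΔ : 0 < Δ) (hb : ∀ a b, G.Adj a b → ℓ a b < Δ)
    (hinj : ∀ w, Set.InjOn (ℓ w) (G.neighborSet w))
    (hv : v ∈ S) (hcard : S.card = n + 1)
    (hconn : (G.induce (↑S : Set V)).Connected) {k m : ℕ} (hkm : k < m) (hm : m < n) :
    ecode G Δ ℓ S v k < ecode G Δ ℓ S v m := by
  induction m with
  | zero => omega
  | succ m ih =>
    have hstep := ecode_succ_lt hΔ hb hinj hv hcard hconn (show m + 1 < n from hm)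
    rcases Nat.lt_or_ge k m with h | h
    · exact (ih h (by omega)).trans hstep
    · have : k = m := by omega
      subst this; exact hstep

lemma explore_toFinset (hv : v ∈ S) (hcard : S.card = n + 1)
    (hconn : (G.induce (↑S : Set V)).Connected) :
    (explore G Δ ℓ S v n).toFinset = S := by
  obtain ⟨hlen, hnd, hsub⟩ := explore_good (Δ := Δ) (ℓ := ℓ) hv hcard hconn n le_rfl
  apply Finset.eq_of_subset_of_card_le
  · exact fun z hz => hsub z (List.mem_toFinset.mp hz)
  · rw [List.toFinset_card_of_nodup hnd, hlen, hcard]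

end Good

/-- Key counting lemma: injective encoding into `n`-subsets of `Fin (Δ * n)`. -/
lemma key (hΔ : 0 < Δ) (hb : ∀ a b, G.Adj a b → ℓ a b < Δ)
    (hinj : ∀ w, Set.InjOn (ℓ w) (G.neighborSet w)) (n : ℕ) (v : V) :
    Nat.card {s : Finset V // v ∈ s ∧ s.card = n + 1 ∧ (G.induce (↑s : Set V)).Connected}
      ≤ Nat.choose (Δ * n) n := by
  classical
  set T := {s : Finset V // v ∈ s ∧ s.card = n + 1 ∧ (G.induce (↑s : Set V)).Connected}
  -- the encoding map
  have hpos : ∀ _ : Fin n, 0 < Δ * n := fun j => Nat.mul_pos hΔ j.pos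
  let f : T → Fin n → Fin (Δ * n) := fun s j =>
    ⟨ecode G Δ ℓ s.1 v j % (Δ * n), Nat.mod_lt _ (hpos j)⟩
  have hflt : ∀ (s : T) (j : Fin n), ecode G Δ ℓ s.1 v j < Δ * n := by
    intro s j
    have := ecode_lt (Δ := Δ) (ℓ := ℓ) hb s.2.1 s.2.2.1 s.2.2.2 j.2
    have : ecode G Δ ℓ s.1 v j < Δ * (j + 1) := this
    have hj1 : (j : ℕ) + 1 ≤ n := j.2
    calc ecode G Δ ℓ s.1 v j < Δ * (j + 1) := this
      _ ≤ Δ * n := Nat.mul_le_mul_left _ hj1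
  have hfval : ∀ (s : T) (j : Fin n), (f s j : ℕ) = ecode G Δ ℓ s.1 v j := by
    intro s j
    simp only [f]
    exact Nat.mod_eq_of_lt (hflt s j)
  have hfmono : ∀ s : T, StrictMono (f s) := by
    intro s j1 j2 h
    have := ecode_strictMono hΔ hb hinj s.2.1 s.2.2.1 s.2.2.2 (show (j1:ℕ) < j2 from h) j2.2
    simp only [Fin.lt_def, f]
    rw [Nat.mod_eq_of_lt (hflt s j1), Nat.mod_eq_of_lt (hflt s j2)]
    exact this
  let F : T → {E : Finset (Fin (Δ * n)) // E.card = n} := fun s =>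
    ⟨Finset.univ.image (f s), by
      rw [Finset.card_image_of_injective _ (hfmono s).injective, Finset.card_univ,
        Fintype.card_fin]⟩
  have hFinj : Function.Injective F := by
    intro s1 s2 hF
    have himg : Finset.univ.image (f s1) = Finset.univ.image (f s2) :=
      congrArg Subtype.val hF
    have hcard1 : (Finset.univ.image (f s1)).card = n := (F s1).2
    have hfeq : f s1 = f s2 := by
      rw [Finset.orderEmbOfFin_unique hcard1 (f := f s1)
          (fun j => Finset.mem_image_of_mem _ (Finset.mem_univ j)) (hfmono s1),
        Finset.orderEmbOfFin_unique hcard1 (f := f s2)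
          (fun j => himg ▸ Finset.mem_image_of_mem _ (Finset.mem_univ j)) (hfmono s2)]
    have hecode : ∀ j : ℕ, j < n → ecode G Δ ℓ s1.1 v j = ecode G Δ ℓ s2.1 v j := by
      intro j hj
      have := congrFun hfeq ⟨j, hj⟩
      have h1 := hfval s1 ⟨j, hj⟩
      have h2 := hfval s2 ⟨j, hj⟩
      rw [this] at h1
      rw [← h1, h2]
    -- lists are equal
    have hlists : ∀ k, k ≤ n → explore G Δ ℓ s1.1 v k = explore G Δ ℓ s2.1 v k := by
      intro k
      induction k with
      | zero => intro _; rfl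
      | succ k ih =>
        intro hk
        have hLeq := ih (by omega)
        set L := explore G Δ ℓ s1.1 v k with hL
        obtain ⟨hm1, -⟩ := nxt_spec (Δ := Δ) (ℓ := ℓ) (v := v)
          (cand_explore_nonempty s1.2.1 s1.2.2.1 s1.2.2.2 (show k < n by omega))
        obtain ⟨-, -, hadj1⟩ := mem_cand hm1
        obtain ⟨hm2, -⟩ := nxt_spec (Δ := Δ) (ℓ := ℓ) (v := v)
          (cand_explore_nonempty s2.2.1 s2.2.2.1 s2.2.2.2 (show k < n by omega))
        obtain ⟨-, -, hadj2⟩ := mem_cand hm2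
        rw [← hLeq] at hadj2
        have hcodes : vcode G Δ ℓ L (nxt G Δ ℓ s1.1 v L)
            = vcode G Δ ℓ L (nxt G Δ ℓ s2.1 v L) := by
          have := hecode k (by omega)
          rw [ecode, ecode, ← hLeq] at this
          exact this
        have hnn : nxt G Δ ℓ s1.1 v L = nxt G Δ ℓ s2.1 v L :=
          vcode_inj hΔ hb hinj hadj1 hadj2 hcodes
        rw [explore, explore, ← hLeq, ← hL, hnn]
    have h1 := explore_toFinset (Δ := Δ) (ℓ := ℓ) s1.2.1 s1.2.2.1 s1.2.2.2
    have h2 := explore_toFinset (Δ := Δ) (ℓ := ℓ) s2.2.1 s2.2.2.1 s2.2.2.2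
    have : s1.1 = s2.1 := by rw [← h1, ← h2, hlists n le_rfl]
    exact Subtype.ext this
  calc Nat.card T ≤ Nat.card {E : Finset (Fin (Δ * n)) // E.card = n} :=
        Nat.card_le_card_of_injective F hFinj
    _ = Nat.choose (Δ * n) n := by
        rw [Nat.card_eq_fintype_card, Fintype.card_finset_len, Fintype.card_fin]

/-- the analytic bound. -/
lemma choose_le (Δ n : ℕ) : ((Nat.choose (Δ * n) n : ℕ) : ℝ) ≤ ((Δ : ℝ) * Real.exp 1) ^ n := by
  have hfact : (0 : ℝ) < (Nat.factorial n : ℝ) := by positivity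
  have h1 : (Nat.choose (Δ * n) n : ℝ) * (Nat.factorial n : ℝ) ≤ ((Δ * n : ℕ) : ℝ) ^ n := by
    have := Nat.descFactorial_le_pow (Δ * n) n
    rw [Nat.descFactorial_eq_factorial_mul_choose] at this
    calc (Nat.choose (Δ * n) n : ℝ) * (Nat.factorial n : ℝ)
        = ((Nat.factorial n * Nat.choose (Δ * n) n : ℕ) : ℝ) := by push_cast; ring
      _ ≤ (((Δ * n) ^ n : ℕ) : ℝ) := Nat.cast_le.mpr this
      _ = ((Δ * n : ℕ) : ℝ) ^ n := by push_cast; ring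
  have h2 : ((n : ℝ)) ^ n ≤ (Nat.factorial n : ℝ) * Real.exp 1 ^ n := by
    have hterm : ((n : ℝ)) ^ n / (Nat.factorial n : ℝ) ≤ Real.exp (n : ℝ) := by
      have hsum := Real.sum_le_exp_of_nonneg (x := (n : ℝ)) (Nat.cast_nonneg n) (n + 1)
      refine le_trans ?_ hsum
      exact Finset.single_le_sum (f := fun i => ((n:ℝ)) ^ i / (Nat.factorial i : ℝ))
        (fun i _ => by positivity) (Finset.self_mem_range_succ n)
    rw [Real.exp_one_pow]
    calc ((n : ℝ)) ^ n = ((n : ℝ)) ^ n / (Nat.factorial n : ℝ) * (Nat.factorial n : ℝ) := by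
          field_simp
      _ ≤ Real.exp (n : ℝ) * (Nat.factorial n : ℝ) :=
          mul_le_mul_of_nonneg_right hterm (le_of_lt hfact)
      _ = (Nat.factorial n : ℝ) * Real.exp (n : ℝ) := by ring
  calc (Nat.choose (Δ * n) n : ℝ)
      = (Nat.choose (Δ * n) n : ℝ) * (Nat.factorial n : ℝ) / (Nat.factorial n : ℝ) := by
        field_simp
    _ ≤ ((Δ * n : ℕ) : ℝ) ^ n / (Nat.factorial n : ℝ) := by
        exact div_le_div_of_nonneg_right h1 hfact.le
    _ = (Δ : ℝ) ^ n * (((n : ℝ)) ^ n / (Nat.factorial n : ℝ)) := by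
        push_cast; rw [mul_pow]; ring
    _ ≤ (Δ : ℝ) ^ n * Real.exp 1 ^ n := by
        apply mul_le_mul_of_nonneg_left _ (by positivity)
        rw [div_le_iff₀ hfact]
        calc ((n : ℝ)) ^ n ≤ (Nat.factorial n : ℝ) * Real.exp 1 ^ n := h2
          _ = Real.exp 1 ^ n * (Nat.factorial n : ℝ) := by ring
    _ = ((Δ : ℝ) * Real.exp 1) ^ n := (mul_pow _ _ _).symm

end Stmt13Aux

/-- In any (locally finite) graph `G` of maximum degree `Δ`, the number of
connected subgraphs with `t` vertices containing a fixed root vertex `v` is at most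
`(Δe)^{t−1}`; here we count vertex subsets of size `t` containing `v` that induce a connected
subgraph. -/
theorem stmt13 {V : Type*} (Δ : ℕ) (G : SimpleGraph V)
    (hdeg : ∀ w : V, (G.neighborSet w).Finite ∧ (G.neighborSet w).ncard ≤ Δ)
    (v : V) (t : ℕ) :
    (Nat.card {s : Finset V // v ∈ s ∧ s.card = t ∧ (G.induce (↑s : Set V)).Connected} : ℝ)
      ≤ ((Δ : ℝ) * Real.exp 1) ^ (t - 1) := by
  classical
  rcases t with _ | n
  · -- t = 0 : empty type
    have : IsEmpty {s : Finset V // v ∈ s ∧ s.card = 0 ∧ (G.induce (↑s : Set V)).Connected} := by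
      constructor
      rintro ⟨s, hv, hc, -⟩
      rw [Finset.card_eq_zero] at hc
      subst hc
      exact absurd hv (Finset.notMem_empty v)
    rw [Nat.card_of_isEmpty]
    norm_num
  · -- t = n + 1
    rcases Nat.eq_zero_or_pos n with hn | hn
    · -- t = 1 : subsingleton, card ≤ 1
      subst hn
      have hsub : ∀ s : {s : Finset V // v ∈ s ∧ s.card = 1 ∧ (G.induce (↑s : Set V)).Connected},
          s.1 = {v} := by
        rintro ⟨s, hv, hc, -⟩
        rw [Finset.card_eq_one] at hc
        obtain ⟨a, rfl⟩ := hc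
        simp only [Finset.mem_singleton] at hv
        subst hv; rfl
      have : Subsingleton
          {s : Finset V // v ∈ s ∧ s.card = 1 ∧ (G.induce (↑s : Set V)).Connected} := by
        constructor
        intro a b
        exact Subtype.ext ((hsub a).trans (hsub b).symm)
      haveI := this
      have h1 : Nat.card
          {s : Finset V // v ∈ s ∧ s.card = 1 ∧ (G.induce (↑s : Set V)).Connected} ≤ 1 := by
        rcases isEmpty_or_nonempty
          {s : Finset V // v ∈ s ∧ s.card = 1 ∧ (G.induce (↑s : Set V)).Connected} with h | h
        · rw [Nat.card_of_isEmpty]; omega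
        · obtain ⟨a⟩ := h
          rw [Nat.card_of_subsingleton a]
      calc (Nat.card {s : Finset V // v ∈ s ∧ s.card = 1 ∧
            (G.induce (↑s : Set V)).Connected} : ℝ) ≤ 1 := by exact_mod_cast h1
        _ = ((Δ : ℝ) * Real.exp 1) ^ (1 - 1) := by norm_num
    · rcases Nat.eq_zero_or_pos Δ with hΔ | hΔ
      · -- Δ = 0 : no connected sets of size ≥ 2
        subst hΔ
        have hempty : IsEmpty {s : Finset V // v ∈ s ∧ s.card = n + 1 ∧
            (G.induce (↑s : Set V)).Connected} := by
          constructor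
          rintro ⟨s, hv, hc, hconn⟩
          obtain ⟨u, hu, hne⟩ := Finset.exists_mem_ne (s := s) (by omega) v
          have hA : ({v} : Finset V) ⊆ s := Finset.singleton_subset_iff.mpr hv
          obtain ⟨u', hu', z, hzS, hzA, hadj⟩ := Stmt13Aux.cut hconn hA
            (Finset.mem_singleton_self v) hu (by simpa using hne)
          rw [Finset.mem_singleton] at hu'
          subst hu'
          have hmem : z ∈ G.neighborSet u' := hadj
          have hfin := (hdeg u').1
          have hcard0 : (G.neighborSet u').ncard = 0 := Nat.le_zero.mp (hdeg u').2
          rw [Set.ncard_eq_zero hfin] at hcard0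
          rw [hcard0] at hmem
          simpa using hmem
        haveI := hempty
        rw [Nat.card_of_isEmpty]
        simp only [Nat.cast_zero]
        positivity
      · -- main case : Δ ≥ 1, n ≥ 1
        -- construct labels
        have hlab : ∀ w : V, ∃ g : V → ℕ, Set.InjOn g (G.neighborSet w) ∧
            ∀ x, G.Adj w x → g x < Δ := by
          intro w
          have hfin := (hdeg w).1
          haveI := hfin.fintype
          have hcard : Fintype.card (G.neighborSet w) ≤ Fintype.card (Fin Δ) := by
            rw [Fintype.card_fin]
            have h1 := (hdeg w).2
            rwa [Set.ncard_eq_toFinset_card', Set.toFinset_card] at h1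
          obtain ⟨emb⟩ := Function.Embedding.nonempty_of_card_le hcard
          refine ⟨fun x => if h : x ∈ G.neighborSet w then (emb ⟨x, h⟩ : ℕ) else 0, ?_, ?_⟩
          · intro a ha b hb hab
            simp only [dif_pos ha, dif_pos hb] at hab
            have h2 : emb ⟨a, ha⟩ = emb ⟨b, hb⟩ := Fin.val_injective hab
            simpa using congrArg Subtype.val (emb.injective h2)
          · intro x hx
            have hx' : x ∈ G.neighborSet w := hx
            simp only [dif_pos hx']
            exact (emb ⟨x, hx'⟩).2
        choose g hg1 hg2 using hlab
        set ℓ : V → V → ℕ := fun w x => g w x with hℓ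
        have hkey := Stmt13Aux.key (G := G) (ℓ := ℓ) hΔ
          (fun a b hab => hg2 a b hab) (fun w => hg1 w) n v
        have hch := Stmt13Aux.choose_le Δ n
        calc (Nat.card {s : Finset V // v ∈ s ∧ s.card = n + 1 ∧
              (G.induce (↑s : Set V)).Connected} : ℝ)
            ≤ ((Nat.choose (Δ * n) n : ℕ) : ℝ) := by exact_mod_cast hkey
          _ ≤ ((Δ : ℝ) * Real.exp 1) ^ n := hch
          _ = ((Δ : ℝ) * Real.exp 1) ^ (n + 1 - 1) := by norm_num
end

section
/- Let H be an r-uniform, κ-spread, edge-transitive hypergraph satisfying f_{t,A} ≤ (K_0/κ)^t |H| for 1 ≤ t ≤ αr (with constants 0 < α < 1 and K_0 independent of r). Color V(H) uniformly at random from [q], q = (1+ε_1)r. Then as r, κ → ∞, the number Z of rainbow edges satisfies Var(Z)/E[Z]^2 → 0, and hence Z ∼ |H|(q)_r/q^r with high probability. -/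
attribute [local instance] Classical.propDecidable
open Finset

noncomputable def glueEquiv {W F : Type*} [Fintype W] [DecidableEq W] (s t : Finset W)
    (hst : Disjoint s t) :
    {f : W → F // Set.InjOn f ↑s ∧ Set.InjOn f ↑t} ≃
      ((↥s ↪ F) × (↥t ↪ F) × (↥((s ∪ t)ᶜ) → F)) where
  toFun f := (⟨fun x => f.1 x, fun a b hab => Subtype.ext (f.2.1 a.2 b.2 hab)⟩,
    ⟨fun x => f.1 x, fun a b hab => Subtype.ext (f.2.2 a.2 b.2 hab)⟩,
    fun x => f.1 x)
  invFun g := ⟨fun x => if hx : x ∈ s then g.1 ⟨x, hx⟩ else if hx' : x ∈ t then g.2.1 ⟨x, hx'⟩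
      else g.2.2 ⟨x, by simp [hx, hx']⟩, by
    constructor
    · intro a ha b hb hab
      simp only [Finset.mem_coe] at ha hb
      dsimp only at hab
      rw [dif_pos ha, dif_pos hb] at hab
      exact congrArg Subtype.val (g.1.injective hab)
    · intro a ha b hb hab
      simp only [Finset.mem_coe] at ha hb
      dsimp only at hab
      rw [dif_neg (fun h => (Finset.disjoint_left.1 hst) h ha),
        dif_pos ha, dif_neg (fun h => (Finset.disjoint_left.1 hst) h hb), dif_pos hb] at hab
      exact congrArg Subtype.val (g.2.1.injective hab)⟩
  left_inv f := by
    apply Subtype.ext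
    funext x
    by_cases hx : x ∈ s
    · simp [hx]; rfl
    · by_cases hx' : x ∈ t <;> simp [hx, hx'] <;> rfl
  right_inv g := by
    refine Prod.ext ?_ (Prod.ext ?_ ?_)
    · ext x
      simp [x.2]
    · ext x
      have hxs : (x : W) ∉ s := fun h => (Finset.disjoint_left.1 hst) h x.2
      simp [hxs, x.2]
    · funext x
      have hx := x.2
      simp only [Finset.mem_compl, Finset.mem_union, not_or] at hx
      simp [hx.1, hx.2]

theorem countInj2 {W : Type*} [Fintype W] [DecidableEq W] {q : ℕ} (s t : Finset W)
    (hst : Disjoint s t) :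
    (Finset.univ.filter fun f : W → Fin q => Set.InjOn f ↑s ∧ Set.InjOn f ↑t).card
      = q.descFactorial s.card * (q.descFactorial t.card
          * q ^ (Fintype.card W - s.card - t.card)) := by
  rw [← Fintype.card_subtype, Fintype.card_congr (glueEquiv s t hst)]
  rw [Fintype.card_prod, Fintype.card_prod, Fintype.card_embedding_eq, Fintype.card_embedding_eq,
    Fintype.card_fun, Fintype.card_coe, Fintype.card_coe, Fintype.card_coe, Fintype.card_fin,
    Finset.card_compl, Finset.card_union_of_disjoint hst, Nat.sub_sub]

theorem countInj1 {W : Type*} [Fintype W] [DecidableEq W] {q : ℕ} (s : Finset W) :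
    (Finset.univ.filter fun f : W → Fin q => Set.InjOn f ↑s).card
      = q.descFactorial s.card * q ^ (Fintype.card W - s.card) := by
  have h1 : (Finset.univ.filter fun f : W → Fin q => Set.InjOn f ↑s)
      = (Finset.univ.filter fun f : W → Fin q =>
          Set.InjOn f ↑s ∧ Set.InjOn f ↑(∅ : Finset W)) := by
    apply Finset.filter_congr
    intro f _
    simp [Set.injOn_empty]
  rw [h1, countInj2 s ∅ (Finset.disjoint_empty_right s)]
  simp

lemma geomSum_le_two {x : ℝ} (h0 : 0 ≤ x) (h : x ≤ 1/2) (n : ℕ) :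
    ∑ i ∈ Finset.range n, x ^ i ≤ 2 := by
  induction n with
  | zero => simp
  | succ n ih =>
      rw [geom_sum_succ]
      have : x * ∑ i ∈ Finset.range n, x ^ i ≤ (1/2) * 2 :=
        mul_le_mul h ih (Finset.sum_nonneg fun i _ => pow_nonneg h0 i) (by norm_num)
      linarith

lemma geom_tail {x : ℝ} (h0 : 0 ≤ x) (h : x ≤ 1/2) (m : ℕ) (S : Finset ℕ)
    (hS : ∀ i ∈ S, m ≤ i) : ∑ i ∈ S, x ^ i ≤ 2 * x ^ m := by
  have hsub : S ⊆ Finset.Ico m (S.sup id + 1) := by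
    intro i hi
    exact Finset.mem_Ico.2 ⟨hS i hi, Nat.lt_succ_of_le (Finset.le_sup (f := id) hi)⟩
  calc ∑ i ∈ S, x ^ i ≤ ∑ i ∈ Finset.Ico m (S.sup id + 1), x ^ i :=
        Finset.sum_le_sum_of_subset_of_nonneg hsub (fun i _ _ => pow_nonneg h0 i)
    _ = ∑ j ∈ Finset.range (S.sup id + 1 - m), x ^ (m + j) :=
        Finset.sum_Ico_eq_sum_range _ _ _
    _ = x ^ m * ∑ j ∈ Finset.range (S.sup id + 1 - m), x ^ j := by
        rw [Finset.mul_sum]; exact Finset.sum_congr rfl fun j _ => pow_add x m j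
    _ ≤ x ^ m * 2 := mul_le_mul_of_nonneg_left (geomSum_le_two h0 h _) (pow_nonneg h0 m)
    _ = 2 * x ^ m := mul_comm _ _

set_option maxHeartbeats 4000000 in
/-- Let `H` be an `r`-uniform, `κ`-spread, edge-transitive hypergraph
satisfying `f_{t,A} ≤ (K₀/κ)^t |H|` for `1 ≤ t ≤ αr` (with constants `0 < α < 1` and `K₀`
independent of `r`). Color `V(H)` uniformly at random from `[q]`, `q = (1+ε₁)r`. Then as
`r, κ → ∞`, the number `Z` of rainbow edges satisfies `Var(Z)/E[Z]² → 0`, and hence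
`Z ∼ |H|(q)_r/q^r` with high probability: for every `ε > 0` there are thresholds `r₀, κ₀`
beyond which `Var(Z) ≤ ε·E[Z]²` and the proportion of colorings with
`|Z − |H|(q)_r/q^r| > ε·|H|(q)_r/q^r` is at most `ε`. -/
theorem stmt16 (α K₀ ε₁ : ℝ) (hα0 : 0 < α) (hα1 : α < 1) (hK₀ : 0 < K₀) (hε₁ : 0 < ε₁)
    (ε : ℝ) (hε : 0 < ε) :
    ∃ r₀ κ₀ : ℝ, ∀ (V : Type) [Fintype V] [DecidableEq V]
      (H : Finset (Finset V)) (r q : ℕ) (κ : ℝ),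
      r₀ ≤ (r : ℝ) → κ₀ ≤ κ →
      (q : ℝ) = (1 + ε₁) * (r : ℝ) →
      (∀ A ∈ H, A.card = r) →
      (∀ S : Finset V, ((H.filter fun A => S ⊆ A).card : ℝ) ≤ (H.card : ℝ) / κ ^ S.card) →
      (∀ A ∈ H, ∀ B ∈ H, ∃ π : V ≃ V, A.image π = B ∧ ∀ E ∈ H, E.image π ∈ H) →
      (∀ A ∈ H, ∀ t : ℕ, 1 ≤ t → (t : ℝ) ≤ α * (r : ℝ) →
        ((H.filter fun B => (B ∩ A).card = t).card : ℝ) ≤ (K₀ / κ) ^ t * (H.card : ℝ)) →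
      let Z : (V → Fin q) → ℝ := fun c =>
        ((H.filter fun A => ∀ x ∈ A, ∀ y ∈ A, c x = c y → x = y).card : ℝ)
      let μ : ℝ := (∑ c : V → Fin q, Z c) / (q : ℝ) ^ (Fintype.card V)
      let m : ℝ := (H.card : ℝ) * (q.descFactorial r : ℝ) / (q : ℝ) ^ r
      ((∑ c : V → Fin q, (Z c - μ) ^ 2) / (q : ℝ) ^ (Fintype.card V) ≤ ε * μ ^ 2)
      ∧ ((Finset.univ.filter fun c : V → Fin q => ε * m < |Z c - m|).card : ℝ)
          ≤ ε * (q : ℝ) ^ (Fintype.card V) := by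
  classical
  set δ : ℝ := min ε (ε^3) with hδdef
  have hδ0 : 0 < δ := lt_min hε (by positivity)
  have hδε : δ ≤ ε := min_le_left _ _
  have hδε3 : δ ≤ ε^3 := min_le_right _ _
  set C : ℝ := (1+ε₁)/ε₁ with hCdef
  have hC0 : 0 < C := by positivity
  set B₂ : ℝ := (2:ℝ)^((1:ℝ)/α) with hB₂def
  have hB₂0 : 0 < B₂ := Real.rpow_pos_of_pos (by norm_num) _
  clear_value δ C B₂
  obtain ⟨N₀, hN₀⟩ : ∃ n : ℕ, (1/2:ℝ)^n ≤ δ/4 := by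
    obtain ⟨n, hn⟩ := exists_pow_lt_of_lt_one (by linarith : (0:ℝ) < δ/4)
      (show (1/2:ℝ) < 1 by norm_num)
    exact ⟨n, hn.le⟩
  refine ⟨max 1 ((N₀ : ℝ)/α), max 1 (max (2*(K₀*C)) (max (4*(K₀*C)/δ) (2*(B₂*C)))), ?_⟩
  intro V _ _ H r q κ hr hκ hq hcard hspread _hedge hft
  intro Z μ m
  have hZdef : ∀ c, Z c
      = ((H.filter fun A => ∀ x ∈ A, ∀ y ∈ A, c x = c y → x = y).card : ℝ) := fun _ => rfl
  have hμdef : μ = (∑ c : V → Fin q, Z c) / (q : ℝ) ^ (Fintype.card V) := rfl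
  have hmdef : m = (H.card : ℝ) * (q.descFactorial r : ℝ) / (q : ℝ) ^ r := rfl
  have hr1R : (1:ℝ) ≤ (r:ℝ) := le_trans (le_max_left _ _) hr
  have hr1 : 1 ≤ r := by exact_mod_cast hr1R
  have hκ1 : (1:ℝ) ≤ κ := le_trans (le_max_left _ _) hκ
  have hκ0 : 0 < κ := lt_of_lt_of_le one_pos hκ1
  have hκa : 2*(K₀*C) ≤ κ :=
    le_trans (le_trans (le_max_left _ _) (le_max_right 1 _)) hκ
  have hκb : 4*(K₀*C)/δ ≤ κ :=
    le_trans (le_trans (le_trans (le_max_left _ _) (le_max_right _ _)) (le_max_right 1 _)) hκ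
  have hκc : 2*(B₂*C) ≤ κ :=
    le_trans (le_trans (le_trans (le_max_right _ _) (le_max_right _ _)) (le_max_right 1 _)) hκ
  have hrq : r < q := by
    have h1 : (r:ℝ) < (q:ℝ) := by
      rw [hq]
      have h2 : 0 < ε₁ * r := mul_pos hε₁ (lt_of_lt_of_le one_pos hr1R)
      linarith only [h2]
    exact_mod_cast h1
  have hq0 : 0 < q := lt_of_le_of_lt (Nat.zero_le r) hrq
  have hN : (0:ℝ) < (q:ℝ)^(Fintype.card V) := by positivity
  have hαr : (N₀:ℝ) ≤ α * r := by
    have h1 : (N₀:ℝ)/α ≤ r := le_trans (le_max_right _ _) hr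
    calc (N₀:ℝ) = α * ((N₀:ℝ)/α) := by field_simp
      _ ≤ α * r := mul_le_mul_of_nonneg_left h1 hα0.le
  set x : ℝ := K₀*C/κ with hxdef
  have hx0 : 0 ≤ x := by
    rw [hxdef]; exact div_nonneg (mul_nonneg hK₀.le hC0.le) hκ0.le
  have hxhalf : x ≤ 1/2 := by rw [hxdef, div_le_iff₀ hκ0]; linarith only [hκa, hK₀, hC0]
  have hxδ : x ≤ δ/4 := by
    rw [hxdef, div_le_iff₀ hκ0]
    have h2 : 4*(K₀*C) ≤ δ * κ := by
      rw [div_le_iff₀ hδ0] at hκb; linarith only [hκb]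
    linarith only [h2, hδ0, hκ0]
  set y : ℝ := B₂*C/κ with hydef
  have hy0 : 0 ≤ y := by
    rw [hydef]; exact div_nonneg (mul_nonneg hB₂0.le hC0.le) hκ0.le
  have hyhalf : y ≤ 1/2 := by rw [hydef, div_le_iff₀ hκ0]; linarith only [hκc, hB₂0, hC0]
  rcases Finset.eq_empty_or_nonempty H with hH | ⟨A₀, hA₀⟩
  · have hZ0 : ∀ c, Z c = 0 := fun c => by rw [hZdef c, hH]; simp
    have hμ0 : μ = 0 := by rw [hμdef]; simp [hZ0]
    have hm0 : m = 0 := by rw [hmdef, hH]; simp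
    constructor
    · simp [hZ0, hμ0]
    · have hempty : (Finset.univ.filter fun c : V → Fin q => ε * m < |Z c - m|) = ∅ := by
        apply Finset.filter_eq_empty_iff.2
        intro c _
        rw [hm0, hZ0 c]
        simp
      rw [hempty]
      simp only [Finset.card_empty, Nat.cast_zero]
      positivity
  -- main case
  have hrn : r ≤ Fintype.card V := by
    calc r = A₀.card := (hcard A₀ hA₀).symm
      _ ≤ Finset.univ.card := Finset.card_le_univ A₀
      _ = Fintype.card V := Finset.card_univ
  set D : ℝ := (q.descFactorial r : ℝ) with hDdef
  have hD0 : 0 < D := by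
    rw [hDdef]
    have h1 : q.descFactorial r ≠ 0 := by
      rw [Ne, Nat.descFactorial_eq_zero_iff_lt]; omega
    exact_mod_cast Nat.pos_of_ne_zero h1
  set p : ℝ := D/(q:ℝ)^r with hpdef
  have hp0 : 0 < p := div_pos hD0 (by positivity)
  have hfilt : ∀ c : V → Fin q,
      (H.filter fun A => ∀ x ∈ A, ∀ y ∈ A, c x = c y → x = y)
        = (H.filter fun A : Finset V => Set.InjOn c (↑A : Set V)) := by
    intro c
    apply Finset.filter_congr
    intro A _
    constructor
    · intro h a ha b hb hne; exact h a ha b hb hne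
    · intro h a ha b hb hne; exact h ha hb hne
  have hsumZ : ∑ c : V → Fin q, Z c
      = (H.card : ℝ) * (D * (q:ℝ)^(Fintype.card V - r)) := by
    calc ∑ c : V → Fin q, Z c
        = ∑ c : V → Fin q, ∑ A ∈ H, (if Set.InjOn c ↑A then (1:ℝ) else 0) := by
          refine Finset.sum_congr rfl fun c _ => ?_
          rw [hZdef c, hfilt c, Finset.natCast_card_filter]
      _ = ∑ A ∈ H, ∑ c : V → Fin q, (if Set.InjOn c ↑A then (1:ℝ) else 0) :=
          Finset.sum_comm
      _ = ∑ A ∈ H,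
          (((Finset.univ.filter fun c : V → Fin q => Set.InjOn c ↑A).card : ℕ) : ℝ) := by
          refine Finset.sum_congr rfl fun A _ => ?_
          rw [Finset.sum_boole]
      _ = ∑ A ∈ H, ((q.descFactorial r * q ^ (Fintype.card V - r) : ℕ) : ℝ) := by
          refine Finset.sum_congr rfl fun A hA => ?_
          rw [countInj1, hcard A hA]
      _ = (H.card : ℝ) * (D * (q:ℝ)^(Fintype.card V - r)) := by
          rw [Finset.sum_const, nsmul_eq_mul, hDdef]; push_cast; ring
  have hpowsplit : (q:ℝ)^(Fintype.card V) = (q:ℝ)^r * (q:ℝ)^(Fintype.card V - r) := by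
    rw [← pow_add]; congr 1; omega
  have hμp : μ = (H.card:ℝ) * p := by
    rw [hμdef, hsumZ, hpowsplit, hpdef]
    have h1 : (q:ℝ)^r ≠ 0 := by positivity
    have h2 : (q:ℝ)^(Fintype.card V - r) ≠ 0 := by positivity
    field_simp
  have hmμ : m = μ := by rw [hmdef, hμp, hpdef, mul_div_assoc]
  have hpair : ∀ A ∈ H, ∀ B ∈ H,
      ((Finset.univ.filter fun c : V → Fin q =>
          Set.InjOn c (↑A : Set V) ∧ Set.InjOn c (↑B : Set V)).card : ℝ)
        ≤ C^((B ∩ A).card) * (p^2 * (q:ℝ)^(Fintype.card V)) := by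
    intro A hA B hB
    set t := (B ∩ A).card with htdef
    set u := (B \ A).card with hudef
    have hut : u + t = r := by
      rw [hudef, htdef, Finset.card_sdiff_add_card_inter, hcard B hB]
    have htr : t ≤ r := by omega
    have hnru : r + u ≤ Fintype.card V := by
      have h1 : (A ∪ (B \ A)).card = r + u := by
        rw [Finset.card_union_of_disjoint Finset.disjoint_sdiff, hcard A hA]
      calc r + u = (A ∪ (B \ A)).card := h1.symm
        _ ≤ Finset.univ.card := Finset.card_le_univ _
        _ = Fintype.card V := Finset.card_univ
    have hmono : (Finset.univ.filter fun c : V → Fin q =>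
          Set.InjOn c (↑A : Set V) ∧ Set.InjOn c (↑B : Set V))
        ⊆ (Finset.univ.filter fun c : V → Fin q =>
          Set.InjOn c (↑A : Set V) ∧ Set.InjOn c (↑(B \ A) : Set V)) := by
      intro c hc
      rw [Finset.mem_filter] at hc ⊢
      exact ⟨hc.1, hc.2.1, hc.2.2.mono (Finset.coe_subset.2 Finset.sdiff_subset)⟩
    have hcnt := countInj2 (q := q) A (B \ A) Finset.disjoint_sdiff
    have hfac : (q - (r - t)).descFactorial t * q.descFactorial (r - t)
        = q.descFactorial r := by
      have h2 := Nat.descFactorial_mul_descFactorial (k := r - t) (m := r) (n := q) (by omega)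
      rwa [show r - (r - t) = t by omega] at h2
    have hE : (q - r)^t ≤ (q - (r - t)).descFactorial t :=
      le_trans (Nat.pow_le_pow_left (by omega) t) (Nat.pow_sub_le_descFactorial _ t)
    have hCq : C * ((q:ℝ) - r) = q := by
      rw [hCdef, hq]; field_simp; ring
    have hqrc : ((q - r : ℕ) : ℝ) = (q:ℝ) - r := by
      push_cast [Nat.cast_sub hrq.le]; ring
    have core : (q.descFactorial u : ℝ) * (q:ℝ)^t ≤ C^t * D := by
      have hu' : u = r - t := by omega
      have hqt : (q:ℝ)^t = C^t * ((q:ℝ) - r)^t := by rw [← mul_pow, hCq]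
      have hEr : ((q:ℝ) - r)^t ≤ ((q - (r - t)).descFactorial t : ℝ) := by
        rw [← hqrc]; exact_mod_cast Nat.pow_le_pow_left (le_refl (q - r)) t |>.trans hE
      calc (q.descFactorial u : ℝ) * (q:ℝ)^t
          = C^t * (((q:ℝ) - r)^t * (q.descFactorial (r - t) : ℝ)) := by
            rw [hqt, hu']; ring
        _ ≤ C^t * (((q - (r - t)).descFactorial t : ℝ) * (q.descFactorial (r - t) : ℝ)) := by
            apply mul_le_mul_of_nonneg_left _ (pow_nonneg hC0.le t)
            exact mul_le_mul_of_nonneg_right hEr (Nat.cast_nonneg _)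
        _ = C^t * D := by rw [hDdef, ← Nat.cast_mul, hfac]
    have hsplit1 : (q:ℝ)^(Fintype.card V)
        = (q:ℝ)^(Fintype.card V - r - u) * (q:ℝ)^(r + u) := by
      rw [← pow_add]; congr 1; omega
    have hsplit2 : ((q:ℝ)^r)^2 = (q:ℝ)^(r + u) * (q:ℝ)^t := by
      rw [← pow_mul, ← pow_add]; congr 1; omega
    calc ((Finset.univ.filter fun c : V → Fin q =>
          Set.InjOn c (↑A : Set V) ∧ Set.InjOn c (↑B : Set V)).card : ℝ)
        ≤ ((Finset.univ.filter fun c : V → Fin q =>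
          Set.InjOn c (↑A : Set V) ∧ Set.InjOn c (↑(B \ A) : Set V)).card : ℝ) := by
          exact_mod_cast Finset.card_le_card hmono
      _ = D * ((q.descFactorial u : ℝ) * (q:ℝ)^(Fintype.card V - r - u)) := by
          rw [hcnt, hcard A hA, hDdef]; push_cast; ring
      _ ≤ C^t * (p^2 * (q:ℝ)^(Fintype.card V)) := by
          apply le_of_mul_le_mul_right _ (show (0:ℝ) < ((q:ℝ)^r)^2 by positivity)
          calc D * ((q.descFactorial u : ℝ) * (q:ℝ)^(Fintype.card V - r - u)) * ((q:ℝ)^r)^2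
              = ((q.descFactorial u : ℝ) * (q:ℝ)^t)
                  * (D * (q:ℝ)^(Fintype.card V - r - u) * (q:ℝ)^(r+u)) := by
                rw [hsplit2]; ring
            _ ≤ (C^t * D) * (D * (q:ℝ)^(Fintype.card V - r - u) * (q:ℝ)^(r+u)) :=
                mul_le_mul_of_nonneg_right core (by positivity)
            _ = C^t * (p^2 * (q:ℝ)^(Fintype.card V)) * ((q:ℝ)^r)^2 := by
                rw [hpdef, hsplit1]; field_simp
  have hfiber : ∀ A ∈ H, ∑ B ∈ H, C^((B ∩ A).card) ≤ (1 + δ) * (H.card : ℝ) := by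
    intro A hA
    have hmaps : ∀ B ∈ H, (B ∩ A).card ∈ Finset.range (r+1) := fun B hB =>
      Finset.mem_range.2 (Nat.lt_succ_of_le (le_trans
        (Finset.card_le_card Finset.inter_subset_left) (le_of_eq (hcard B hB))))
    rw [← Finset.sum_fiberwise_of_maps_to hmaps (fun B => C^((B ∩ A).card))]
    have hinner : ∀ j ∈ Finset.range (r+1),
        ∑ B ∈ H.filter (fun B => (B ∩ A).card = j), C^((B ∩ A).card)
          = ((H.filter fun B => (B ∩ A).card = j).card : ℝ) * C^j := by
      intro j _
      rw [Finset.sum_congr rfl (fun B hB => by rw [(Finset.mem_filter.1 hB).2]),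
        Finset.sum_const, nsmul_eq_mul]
    rw [Finset.sum_congr rfl hinner, Finset.sum_range_succ']
    have h0 : ((H.filter fun B => (B ∩ A).card = 0).card : ℝ) * C^0 ≤ (H.card : ℝ) := by
      rw [pow_zero, mul_one]
      exact_mod_cast Finset.card_filter_le _ _
    have hfsp : ∀ j : ℕ, j ≤ r → ((H.filter fun B => (B ∩ A).card = j).card : ℝ)
        ≤ (r.choose j : ℝ) * ((H.card:ℝ)/κ^j) := by
      intro j _
      have hsub : H.filter (fun B => (B ∩ A).card = j)
          ⊆ (A.powersetCard j).biUnion (fun S => H.filter fun B' => S ⊆ B') := by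
        intro B hB
        obtain ⟨hBH, hBt⟩ := Finset.mem_filter.1 hB
        exact Finset.mem_biUnion.2 ⟨B ∩ A,
          Finset.mem_powersetCard.2 ⟨Finset.inter_subset_right, hBt⟩,
          Finset.mem_filter.2 ⟨hBH, Finset.inter_subset_left⟩⟩
      calc ((H.filter fun B => (B ∩ A).card = j).card : ℝ)
          ≤ (((A.powersetCard j).biUnion fun S => H.filter fun B' => S ⊆ B').card : ℝ) := by
            exact_mod_cast Finset.card_le_card hsub
        _ ≤ ∑ S ∈ A.powersetCard j, ((H.filter fun B' => S ⊆ B').card : ℝ) := by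
            exact_mod_cast Finset.card_biUnion_le
        _ ≤ ∑ S ∈ A.powersetCard j, (H.card:ℝ)/κ^j := by
            apply Finset.sum_le_sum
            intro S hS
            have hScard := (Finset.mem_powersetCard.1 hS).2
            have h2 := hspread S
            rwa [hScard] at h2
        _ = ((A.powersetCard j).card : ℝ) * ((H.card:ℝ)/κ^j) := by
            rw [Finset.sum_const, nsmul_eq_mul]
        _ = (r.choose j : ℝ) * ((H.card:ℝ)/κ^j) := by
            rw [Finset.card_powersetCard, hcard A hA]
    have htail : ∑ i ∈ Finset.range r,
        ((H.filter fun B => (B ∩ A).card = (i+1)).card : ℝ) * C^(i+1) ≤ δ * (H.card : ℝ) := by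
      rw [← Finset.sum_filter_add_sum_filter_not (Finset.range r) (fun i : ℕ => ((i:ℝ)+1) ≤ α * r)]
      have hb1 : ∑ i ∈ (Finset.range r).filter (fun i : ℕ => ((i:ℝ)+1) ≤ α * r),
          ((H.filter fun B => (B ∩ A).card = (i+1)).card : ℝ) * C^(i+1)
            ≤ (H.card:ℝ) * (δ/2) := by
        calc ∑ i ∈ (Finset.range r).filter (fun i : ℕ => ((i:ℝ)+1) ≤ α * r),
            ((H.filter fun B => (B ∩ A).card = (i+1)).card : ℝ) * C^(i+1)
            ≤ ∑ i ∈ (Finset.range r).filter (fun i : ℕ => ((i:ℝ)+1) ≤ α * r),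
              (H.card:ℝ) * x^(i+1) := by
              apply Finset.sum_le_sum
              intro i hi
              obtain ⟨hi1, hi2⟩ := Finset.mem_filter.1 hi
              have hi2' : ((i+1 : ℕ):ℝ) ≤ α * r := by push_cast; exact hi2
              have hf := hft A hA (i+1) (Nat.le_add_left 1 i) hi2'
              calc ((H.filter fun B => (B ∩ A).card = (i+1)).card : ℝ) * C^(i+1)
                  ≤ ((K₀/κ)^(i+1) * (H.card:ℝ)) * C^(i+1) :=
                    mul_le_mul_of_nonneg_right hf (pow_nonneg hC0.le _)
                _ = (H.card:ℝ) * x^(i+1) := by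
                    have e1 : (K₀/κ)^(i+1) * C^(i+1) = x^(i+1) := by
                      rw [← mul_pow, hxdef, div_mul_eq_mul_div]
                    calc (K₀/κ)^(i+1) * (H.card:ℝ) * C^(i+1)
                        = ((K₀/κ)^(i+1) * C^(i+1)) * (H.card:ℝ) := by ring
                      _ = x^(i+1) * (H.card:ℝ) := by rw [e1]
                      _ = (H.card:ℝ) * x^(i+1) := by ring
          _ = (H.card:ℝ) * ∑ i ∈ (Finset.range r).filter (fun i : ℕ => ((i:ℝ)+1) ≤ α * r),
              x^(i+1) := by rw [Finset.mul_sum]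
          _ ≤ (H.card:ℝ) * (δ/2) := by
              apply mul_le_mul_of_nonneg_left _ (Nat.cast_nonneg _)
              have h1 : ∑ i ∈ (Finset.range r).filter (fun i : ℕ => ((i:ℝ)+1) ≤ α * r), x^(i+1)
                  = x * ∑ i ∈ (Finset.range r).filter (fun i : ℕ => ((i:ℝ)+1) ≤ α * r), x^i := by
                rw [Finset.mul_sum]
                exact Finset.sum_congr rfl fun i _ => pow_succ' x i
              rw [h1]
              have h2 : ∑ i ∈ (Finset.range r).filter (fun i : ℕ => ((i:ℝ)+1) ≤ α * r), x^i ≤ 2 :=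
                le_trans (Finset.sum_le_sum_of_subset_of_nonneg (Finset.filter_subset _ _)
                  fun i _ _ => pow_nonneg hx0 i) (geomSum_le_two hx0 hxhalf r)
              calc x * ∑ i ∈ (Finset.range r).filter (fun i : ℕ => ((i:ℝ)+1) ≤ α * r), x^i
                  ≤ x * 2 := mul_le_mul_of_nonneg_left h2 hx0
                _ ≤ (δ/4) * 2 := mul_le_mul_of_nonneg_right hxδ (by norm_num)
                _ = δ/2 := by ring
      have hb2 : ∑ i ∈ (Finset.range r).filter (fun i : ℕ => ¬ ((i:ℝ)+1) ≤ α * r),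
          ((H.filter fun B => (B ∩ A).card = (i+1)).card : ℝ) * C^(i+1)
            ≤ (H.card:ℝ) * (δ/2) := by
        calc ∑ i ∈ (Finset.range r).filter (fun i : ℕ => ¬ ((i:ℝ)+1) ≤ α * r),
            ((H.filter fun B => (B ∩ A).card = (i+1)).card : ℝ) * C^(i+1)
            ≤ ∑ i ∈ (Finset.range r).filter (fun i : ℕ => ¬ ((i:ℝ)+1) ≤ α * r),
              (H.card:ℝ) * (1/2:ℝ)^(i+1) := by
              apply Finset.sum_le_sum
              intro i hi
              obtain ⟨hi1, hi2⟩ := Finset.mem_filter.1 hi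
              have hir : i + 1 ≤ r := Finset.mem_range.1 hi1
              have hti : α * r < (i:ℝ)+1 := lt_of_not_ge hi2
              -- choose bound
              have hch : (r.choose (i+1) : ℝ) ≤ B₂^(i+1) := by
                have hn1 : r.choose (i+1) ≤ 2^r := by
                  calc r.choose (i+1) ≤ ∑ j ∈ Finset.range (r+1), r.choose j :=
                      Finset.single_le_sum (fun j _ => Nat.zero_le _)
                        (Finset.mem_range.2 (by omega))
                    _ = 2^r := Nat.sum_range_choose r
                have hn2 : ((r.choose (i+1) : ℕ):ℝ) ≤ ((2:ℕ):ℝ)^r := by exact_mod_cast hn1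
                have hn3 : ((2:ℕ):ℝ)^r = (2:ℝ)^((r:ℝ)) := by
                  rw [Real.rpow_natCast]; norm_num
                have hn4 : (r:ℝ) ≤ ((i:ℝ)+1)*(1/α) := by
                  have h' : (r:ℝ) ≤ ((i:ℝ)+1)/α := by
                    rw [le_div_iff₀ hα0]; linarith only [hti]
                  calc (r:ℝ) ≤ ((i:ℝ)+1)/α := h'
                    _ = ((i:ℝ)+1)*(1/α) := by ring
                have hn5 : (2:ℝ)^((r:ℝ)) ≤ (2:ℝ)^(((i:ℝ)+1)*(1/α)) :=
                  Real.rpow_le_rpow_of_exponent_le (by norm_num) hn4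
                have hn6 : (2:ℝ)^(((i:ℝ)+1)*(1/α)) = B₂^(i+1) := by
                  rw [hB₂def, show ((i:ℝ)+1)*(1/α) = ((1:ℝ)/α)*(((i+1:ℕ):ℝ)) by push_cast; ring,
                    Real.rpow_mul (by norm_num), Real.rpow_natCast]
                calc (r.choose (i+1) : ℝ) ≤ ((2:ℕ):ℝ)^r := hn2
                  _ = (2:ℝ)^((r:ℝ)) := hn3
                  _ ≤ (2:ℝ)^(((i:ℝ)+1)*(1/α)) := hn5
                  _ = B₂^(i+1) := hn6
              calc ((H.filter fun B => (B ∩ A).card = (i+1)).card : ℝ) * C^(i+1)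
                  ≤ ((r.choose (i+1) : ℝ) * ((H.card:ℝ)/κ^(i+1))) * C^(i+1) :=
                    mul_le_mul_of_nonneg_right (hfsp (i+1) hir) (pow_nonneg hC0.le _)
                _ = (H.card:ℝ) * ((r.choose (i+1) : ℝ) * (C/κ)^(i+1)) := by
                    rw [div_pow]; ring
                _ ≤ (H.card:ℝ) * (B₂^(i+1) * (C/κ)^(i+1)) := by
                    apply mul_le_mul_of_nonneg_left _ (Nat.cast_nonneg _)
                    exact mul_le_mul_of_nonneg_right hch (by positivity)
                _ = (H.card:ℝ) * y^(i+1) := by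
                    rw [hydef, ← mul_pow, mul_div_assoc]
                _ ≤ (H.card:ℝ) * (1/2:ℝ)^(i+1) := by
                    apply mul_le_mul_of_nonneg_left _ (Nat.cast_nonneg _)
                    exact pow_le_pow_left₀ hy0 hyhalf (i+1)
          _ = (H.card:ℝ) * ∑ i ∈ (Finset.range r).filter (fun i : ℕ => ¬ ((i:ℝ)+1) ≤ α * r),
              (1/2:ℝ)^(i+1) := by rw [Finset.mul_sum]
          _ ≤ (H.card:ℝ) * (δ/2) := by
              apply mul_le_mul_of_nonneg_left _ (Nat.cast_nonneg _)
              have hmem : ∀ i ∈ (Finset.range r).filter (fun i : ℕ => ¬ ((i:ℝ)+1) ≤ α * r),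
                  N₀ ≤ i := by
                intro i hi
                have hti : α * r < (i:ℝ)+1 := lt_of_not_ge (Finset.mem_filter.1 hi).2
                have hlt : (N₀:ℝ) < (i:ℝ)+1 := lt_of_le_of_lt hαr hti
                have hlt2 : (N₀:ℝ) < ((i+1:ℕ):ℝ) := by push_cast; linarith only [hlt]
                have h5 : N₀ < i + 1 := by exact_mod_cast hlt2
                omega
              have h1 : ∑ i ∈ (Finset.range r).filter (fun i : ℕ => ¬ ((i:ℝ)+1) ≤ α * r),
                  (1/2:ℝ)^(i+1)
                  = (1/2:ℝ) * ∑ i ∈ (Finset.range r).filter (fun i : ℕ => ¬ ((i:ℝ)+1) ≤ α * r),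
                    (1/2:ℝ)^i := by
                rw [Finset.mul_sum]
                exact Finset.sum_congr rfl fun i _ => pow_succ' (1/2:ℝ) i
              rw [h1]
              have h2 := geom_tail (by norm_num : (0:ℝ) ≤ 1/2) (le_refl (1/2:ℝ)) N₀ _ hmem
              calc (1/2:ℝ) * ∑ i ∈ (Finset.range r).filter (fun i : ℕ => ¬ ((i:ℝ)+1) ≤ α * r),
                  (1/2:ℝ)^i ≤ (1/2:ℝ) * (2 * (1/2:ℝ)^N₀) := by
                    apply mul_le_mul_of_nonneg_left h2 (by norm_num)
                _ = (1/2:ℝ)^N₀ := by ring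
                _ ≤ δ/4 := hN₀
                _ ≤ δ/2 := by linarith only [hδ0]
      refine le_trans (add_le_add hb1 hb2) (le_of_eq ?_)
      ring
    have hHc0 : (0:ℝ) ≤ (H.card : ℝ) := Nat.cast_nonneg _
    calc (∑ i ∈ Finset.range r,
          ((H.filter fun B => (B ∩ A).card = (i+1)).card : ℝ) * C^(i+1))
          + ((H.filter fun B => (B ∩ A).card = 0).card : ℝ) * C^0
        ≤ δ * (H.card:ℝ) + (H.card:ℝ) := add_le_add htail h0
      _ = (1 + δ) * (H.card:ℝ) := by ring
  have hmulite : ∀ (P Q : Prop),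
      (if P then (1:ℝ) else 0) * (if Q then (1:ℝ) else 0) = if P ∧ Q then (1:ℝ) else 0 := by
    intro P Q
    by_cases hP : P <;> by_cases hQ : Q <;> simp [hP, hQ]
  have hsq : ∑ c : V → Fin q, (Z c)^2
      = ∑ A ∈ H, ∑ B ∈ H, ((Finset.univ.filter fun c : V → Fin q =>
          Set.InjOn c (↑A : Set V) ∧ Set.InjOn c (↑B : Set V)).card : ℝ) := by
    calc ∑ c : V → Fin q, (Z c)^2
        = ∑ c : V → Fin q, ∑ A ∈ H, ∑ B ∈ H,
            (if Set.InjOn c (↑A : Set V) ∧ Set.InjOn c (↑B : Set V) then (1:ℝ) else 0) := by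
          refine Finset.sum_congr rfl fun c _ => ?_
          rw [hZdef c, hfilt c, sq, Finset.natCast_card_filter, Finset.sum_mul_sum]
          refine Finset.sum_congr rfl fun A _ => Finset.sum_congr rfl fun B _ => ?_
          by_cases h1 : Set.InjOn c (↑A : Set V) <;>
            by_cases h2 : Set.InjOn c (↑B : Set V) <;> simp [h1, h2]
      _ = ∑ A ∈ H, ∑ c : V → Fin q, ∑ B ∈ H,
            (if Set.InjOn c (↑A : Set V) ∧ Set.InjOn c (↑B : Set V) then (1:ℝ) else 0) :=
          Finset.sum_comm
      _ = ∑ A ∈ H, ∑ B ∈ H, ∑ c : V → Fin q,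
            (if Set.InjOn c (↑A : Set V) ∧ Set.InjOn c (↑B : Set V) then (1:ℝ) else 0) :=
          Finset.sum_congr rfl fun A _ => Finset.sum_comm
      _ = ∑ A ∈ H, ∑ B ∈ H, ((Finset.univ.filter fun c : V → Fin q =>
            Set.InjOn c (↑A : Set V) ∧ Set.InjOn c (↑B : Set V)).card : ℝ) := by
          refine Finset.sum_congr rfl fun A _ => Finset.sum_congr rfl fun B _ => ?_
          rw [Finset.sum_boole]
  have hp2N : (0:ℝ) ≤ p^2 * (q:ℝ)^(Fintype.card V) := by positivity
  have key : ∑ c : V → Fin q, (Z c)^2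
      ≤ (1 + δ) * ((H.card:ℝ)^2 * (p^2 * (q:ℝ)^(Fintype.card V))) := by
    rw [hsq]
    calc ∑ A ∈ H, ∑ B ∈ H, ((Finset.univ.filter fun c : V → Fin q =>
          Set.InjOn c (↑A : Set V) ∧ Set.InjOn c (↑B : Set V)).card : ℝ)
        ≤ ∑ A ∈ H, ∑ B ∈ H, C^((B ∩ A).card) * (p^2 * (q:ℝ)^(Fintype.card V)) :=
          Finset.sum_le_sum fun A hA => Finset.sum_le_sum fun B hB => hpair A hA B hB
      _ = ∑ A ∈ H, (∑ B ∈ H, C^((B ∩ A).card)) * (p^2 * (q:ℝ)^(Fintype.card V)) := by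
          refine Finset.sum_congr rfl fun A _ => ?_
          rw [Finset.sum_mul]
      _ ≤ ∑ A ∈ H, ((1 + δ) * (H.card:ℝ)) * (p^2 * (q:ℝ)^(Fintype.card V)) :=
          Finset.sum_le_sum fun A hA =>
            mul_le_mul_of_nonneg_right (hfiber A hA) hp2N
      _ = (1 + δ) * ((H.card:ℝ)^2 * (p^2 * (q:ℝ)^(Fintype.card V))) := by
          rw [Finset.sum_const, nsmul_eq_mul]; ring
  have hNcard : (Fintype.card (V → Fin q) : ℝ) = (q:ℝ)^(Fintype.card V) := by
    rw [Fintype.card_fun, Fintype.card_fin]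
    push_cast
    ring
  have hsumμ : ∑ c : V → Fin q, Z c = (q:ℝ)^(Fintype.card V) * μ := by
    rw [hμdef]
    field_simp
  have hμsq : μ^2 = (H.card:ℝ)^2 * p^2 := by rw [hμp]; ring
  have hvar : ∑ c : V → Fin q, (Z c - μ)^2
      ≤ δ * ((q:ℝ)^(Fintype.card V) * μ^2) := by
    have hexp : ∑ c : V → Fin q, (Z c - μ)^2
        = (∑ c : V → Fin q, (Z c)^2) - (q:ℝ)^(Fintype.card V) * μ^2 := by
      have h1 : ∀ c : V → Fin q, (Z c - μ)^2 = (Z c)^2 - 2*μ*(Z c) + μ^2 := fun c => by ring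
      rw [Finset.sum_congr rfl fun c _ => h1 c]
      rw [Finset.sum_add_distrib, Finset.sum_sub_distrib, ← Finset.mul_sum, Finset.sum_const,
        nsmul_eq_mul, Finset.card_univ, hNcard, hsumμ]
      ring
    rw [hexp]
    have h2 : (1 + δ) * ((H.card:ℝ)^2 * (p^2 * (q:ℝ)^(Fintype.card V)))
        = (q:ℝ)^(Fintype.card V) * μ^2 + δ * ((q:ℝ)^(Fintype.card V) * μ^2) := by
      rw [hμsq]; ring
    linarith only [key, h2]
  constructor
  · rw [div_le_iff₀ hN]
    have h3 : δ * ((q:ℝ)^(Fintype.card V) * μ^2) ≤ ε * μ^2 * (q:ℝ)^(Fintype.card V) := by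
      have h4 : δ * μ^2 ≤ ε * μ^2 :=
        mul_le_mul_of_nonneg_right hδε (sq_nonneg μ)
      calc δ * ((q:ℝ)^(Fintype.card V) * μ^2) = (δ * μ^2) * (q:ℝ)^(Fintype.card V) := by ring
        _ ≤ (ε * μ^2) * (q:ℝ)^(Fintype.card V) := mul_le_mul_of_nonneg_right h4 hN.le
    exact le_trans hvar h3
  · have hH0 : (0:ℝ) < (H.card:ℝ) := by
      exact_mod_cast Finset.card_pos.2 ⟨A₀, hA₀⟩
    have hm0 : 0 < m := by
      rw [hmμ, hμp]; exact mul_pos hH0 hp0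
    have hcount : ((Finset.univ.filter fun c : V → Fin q => ε * m < |Z c - m|).card : ℝ)
        * (ε*m)^2 ≤ δ * ((q:ℝ)^(Fintype.card V) * μ^2) := by
      calc ((Finset.univ.filter fun c : V → Fin q => ε * m < |Z c - m|).card : ℝ) * (ε*m)^2
          = ∑ _c ∈ (Finset.univ.filter fun c : V → Fin q => ε * m < |Z c - m|), (ε*m)^2 := by
            rw [Finset.sum_const, nsmul_eq_mul]
        _ ≤ ∑ c ∈ (Finset.univ.filter fun c : V → Fin q => ε * m < |Z c - m|), (Z c - μ)^2 := by
            apply Finset.sum_le_sum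
            intro c hc
            have hc' := (Finset.mem_filter.1 hc).2
            rw [← hmμ]
            calc (ε*m)^2 ≤ |Z c - m|^2 :=
                pow_le_pow_left₀ (by positivity) hc'.le 2
              _ = (Z c - m)^2 := sq_abs _
        _ ≤ ∑ c : V → Fin q, (Z c - μ)^2 :=
            Finset.sum_le_sum_of_subset_of_nonneg (Finset.filter_subset _ _)
              (fun c _ _ => sq_nonneg _)
        _ ≤ δ * ((q:ℝ)^(Fintype.card V) * μ^2) := hvar
    have hm2 : (0:ℝ) < m^2 := by positivity
    have h4 : (((Finset.univ.filter fun c : V → Fin q => ε * m < |Z c - m|).card : ℝ) * ε^2)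
        * m^2 ≤ (δ * (q:ℝ)^(Fintype.card V)) * m^2 := by
      calc (((Finset.univ.filter fun c : V → Fin q => ε * m < |Z c - m|).card : ℝ) * ε^2) * m^2
          = ((Finset.univ.filter fun c : V → Fin q => ε * m < |Z c - m|).card : ℝ) * (ε*m)^2 := by
            ring
        _ ≤ δ * ((q:ℝ)^(Fintype.card V) * μ^2) := hcount
        _ = (δ * (q:ℝ)^(Fintype.card V)) * m^2 := by rw [hmμ]; ring
    have h5 : ((Finset.univ.filter fun c : V → Fin q => ε * m < |Z c - m|).card : ℝ) * ε^2
        ≤ δ * (q:ℝ)^(Fintype.card V) := le_of_mul_le_mul_right h4 hm2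
    have h6 : δ * (q:ℝ)^(Fintype.card V) ≤ (ε * (q:ℝ)^(Fintype.card V)) * ε^2 := by
      have h7 : δ ≤ ε * ε^2 := by
        calc δ ≤ ε^3 := hδε3
          _ = ε * ε^2 := by ring
      calc δ * (q:ℝ)^(Fintype.card V) ≤ (ε * ε^2) * (q:ℝ)^(Fintype.card V) :=
          mul_le_mul_of_nonneg_right h7 hN.le
        _ = (ε * (q:ℝ)^(Fintype.card V)) * ε^2 := by ring
    have h8 : ((Finset.univ.filter fun c : V → Fin q => ε * m < |Z c - m|).card : ℝ) * ε^2
        ≤ (ε * (q:ℝ)^(Fintype.card V)) * ε^2 := le_trans h5 h6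
    exact le_of_mul_le_mul_right h8 (by positivity)
end
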